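/- arXiv:1410.2941 — 4 statements merged into one kernel-verified Lean document; each statement's English description precedes it below -/
import Mathlib

section
/- Let G be a graph (simple, connected, locally finite, with edges of arbitrary lengths), L(G) its line graph, and h : L(G) → G the canonical map. Then h is 1-Lipschitz: d_G(h(x), h(y)) ≤ d_{L(G)}(x, y) for all x, y ∈ L(G). -/
open Metric
open scoped ENNReal

noncomputable section

/-- A geodesic arc from `x` to `y` in a metric space `X`: the image of an isometric
embedding of the interval `[0, dist x y]` sending `0` to `x` and `dist x y` to `y`. -/
def IsGeodesicArc {X : Type} [MetricSpace X] (x y : X) (s : Set X) : Prop :=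
  ∃ γ : ℝ → X, γ 0 = x ∧ γ (dist x y) = y ∧
    (∀ a ∈ Set.Icc (0 : ℝ) (dist x y), ∀ b ∈ Set.Icc (0 : ℝ) (dist x y),
      dist (γ a) (γ b) = |a - b|) ∧
    s = γ '' Set.Icc (0 : ℝ) (dist x y)

/-- A geodesic triangle with vertices `x, y, z` and sides `s₁ = [xy]`, `s₂ = [yz]`,
`s₃ = [zx]`. -/
def IsGeodTriangle {X : Type} [MetricSpace X] (x y z : X) (s₁ s₂ s₃ : Set X) : Prop :=
  IsGeodesicArc x y s₁ ∧ IsGeodesicArc y z s₂ ∧ IsGeodesicArc z x s₃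

/-- The sharp constant for thinness of the side `s` with respect to the set `t`
(the union of the other sides): the supremum over points of `s` of the distance to `t`. -/
def sideThin {X : Type} [MetricSpace X] (s t : Set X) : ℝ≥0∞ :=
  ⨆ p ∈ s, ENNReal.ofReal (infDist p t)

/-- The sharp thin constant `δ(T)` of a triangle (or trilateral) with sides
`s₁ s₂ s₃`: a triangle is `δ`-thin iff `triThin s₁ s₂ s₃ ≤ δ`. -/
def triThin {X : Type} [MetricSpace X] (s₁ s₂ s₃ : Set X) : ℝ≥0∞ :=
  max (sideThin s₁ (s₂ ∪ s₃)) (max (sideThin s₂ (s₃ ∪ s₁)) (sideThin s₃ (s₁ ∪ s₂)))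

/-- The hyperbolicity constant `δ(X)` of a metric space:
`δ(X) = sup { δ(T) : T is a geodesic triangle in X }` (with value in `[0,∞]`). -/
def hypConst (X : Type) [MetricSpace X] : ℝ≥0∞ :=
  ⨆ (x : X) (y : X) (z : X) (s₁ : Set X) (s₂ : Set X) (s₃ : Set X)
    (_ : IsGeodTriangle x y z s₁ s₂ s₃), triThin s₁ s₂ s₃

/-- A simple closed curve in a metric space: an injective continuous image of a circle. -/
def IsSimpleClosedCurve {X : Type} [MetricSpace X] (s : Set X) : Prop :=
  ∃ f : AddCircle (1 : ℝ) → X, Continuous f ∧ Function.Injective f ∧ Set.range f = s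

/-- A simple, connected, locally finite graph with edges of arbitrary (positive) lengths,
regarded as a geodesic metric space `X`: each edge `[u,v]` of length `ℓ s(u,v)` is
identified with the real interval `[0, ℓ s(u,v)]` via the parametrization `param u v`,
and the distance is the shortest-path distance. -/
structure MetricGraph where
  /-- the vertices -/
  V : Type
  /-- the (simple) graph structure -/
  G : SimpleGraph V
  conn : G.Connected
  locFin : ∀ v : V, (G.neighborSet v).Finite
  /-- the length of each edge -/
  ℓ : Sym2 V → ℝ
  ℓ_pos : ∀ e ∈ G.edgeSet, 0 < ℓ e
  /-- the set of points of the graph, as a metric space -/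
  X : Type
  [mX : MetricSpace X]
  /-- the inclusion of the vertices among the points -/
  ι : V → X
  ι_inj : Function.Injective ι
  /-- the arclength parametrization of each edge by `[0, ℓ s(u,v)]` -/
  param : ∀ u v : V, G.Adj u v → ℝ → X
  param_zero : ∀ (u v : V) (h : G.Adj u v), param u v h 0 = ι u
  param_symm : ∀ (u v : V) (h : G.Adj u v) (t : ℝ),
    param v u h.symm t = param u v h (ℓ s(u, v) - t)
  param_injOn : ∀ (u v : V) (h : G.Adj u v),
    Set.InjOn (param u v h) (Set.Icc 0 (ℓ s(u, v)))
  /-- every point of the graph lies on some edge -/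
  cover : ∀ x : X, ∃ (u v : V) (h : G.Adj u v),
    ∃ t ∈ Set.Icc (0 : ℝ) (ℓ s(u, v)), x = param u v h t
  /-- the distance between vertices is the shortest-path distance -/
  dist_vertex : ∀ u v : V,
    dist (ι u) (ι v) = sInf { L : ℝ | ∃ w : G.Walk u v, L = (w.edges.map ℓ).sum }
  /-- the distance from an interior point of an edge to any other point is realized
  either within the edge or through one of the two endpoints of the edge -/
  dist_eq : ∀ (u v : V) (h : G.Adj u v), ∀ t ∈ Set.Icc (0 : ℝ) (ℓ s(u, v)), ∀ y : X,
    dist (param u v h t) y =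
      sInf ({ t + dist (ι u) y, (ℓ s(u, v) - t) + dist (ι v) y } ∪
            { d : ℝ | ∃ r ∈ Set.Icc (0 : ℝ) (ℓ s(u, v)), y = param u v h r ∧ d = |t - r| })
  /-- the space of points is a geodesic metric space -/
  geodesic : ∀ x y : X, ∃ s : Set X, IsGeodesicArc x y s

attribute [instance] MetricGraph.mX

namespace MetricGraph

variable (M : MetricGraph)

/-- The set of points of an edge of the graph. -/
def edgePoints {u v : M.V} (h : M.G.Adj u v) : Set M.X :=
  M.param u v h '' Set.Icc 0 (M.ℓ s(u, v))

/-- The midpoint `Pm(e)` of an edge. -/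
def midpt {u v : M.V} (h : M.G.Adj u v) : M.X :=
  M.param u v h (M.ℓ s(u, v) / 2)

/-- `PMV(G)`: the set of points which are vertices or midpoints of edges. -/
def PMV : Set M.X :=
  Set.range M.ι ∪ { x | ∃ (u v : M.V) (h : M.G.Adj u v), x = M.midpt h }

/-- `l_max = sup_{e ∈ E(G)} L(e)` (with value in `[0,∞]`). -/
def lmax : ℝ≥0∞ :=
  ⨆ e : M.G.edgeSet, ENNReal.ofReal (M.ℓ e.1)

/-- A cycle graph: a (finite) connected graph in which every vertex has degree 2.
(Connectedness is part of the `MetricGraph` structure.) -/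
def IsCycleGraph : Prop :=
  Finite M.V ∧ ∀ v : M.V, (M.G.neighborSet v).ncard = 2

end MetricGraph

/-- The line graph `L(G)` of a metric graph `G`: its vertices correspond to the edges
of `G`, two of them being adjacent when the corresponding edges of `G` share a vertex;
the edge `[V_{e_i}, V_{e_j}]` of `L(G)` has length `(L(e_i) + L(e_j))/2`. -/
structure LineGraphOf (M : MetricGraph) where
  /-- the line graph, as a metric graph -/
  L : MetricGraph
  /-- the vertices of `L(G)` correspond to the edges of `G` -/
  vEquiv : L.V ≃ M.G.edgeSet
  adj_iff : ∀ a b : L.V, L.G.Adj a b ↔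
    (a ≠ b ∧ ∃ v : M.V, v ∈ (vEquiv a : Sym2 M.V) ∧ v ∈ (vEquiv b : Sym2 M.V))
  len_eq : ∀ a b : L.V, L.G.Adj a b →
    L.ℓ s(a, b) = (M.ℓ (vEquiv a : Sym2 M.V) + M.ℓ (vEquiv b : Sym2 M.V)) / 2

/-- The set `PM_LV(L(G))`: points of `L(G)` which are vertices or points
`Pm_L([V_{e_i},V_{e_j}])`, i.e. the point of the edge `[V_{e_i},V_{e_j}]` at distance
`L(e_i)/2` from `V_{e_i}`. -/
def lineGraphPMLV (M : MetricGraph) (LG : LineGraphOf M) : Set LG.L.X :=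
  Set.range LG.L.ι ∪
    { x | ∃ (a b : LG.L.V) (hab : LG.L.G.Adj a b),
        x = LG.L.param a b hab (M.ℓ (LG.vEquiv a : Sym2 M.V) / 2) }

/-- The canonical map `h : L(G) → G`.  It sends the vertex `V_e` to the midpoint `Pm(e)`
of `e`, the point `Pm_L([V_{e_i},V_{e_j}])` to the common vertex `e_i ∩ e_j`, and maps
each half-edge of `L(G)` isometrically onto the corresponding half-edge of `G`:
if `e_a = s(u,w)` and `w` is the common vertex of `e_a` and `e_b`, then the point of the
edge `[V_{e_a},V_{e_b}]` at distance `t ∈ [0, L(e_a)/2]` from `V_{e_a}` is sent to the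
point of `e_a` at distance `L(e_a)/2 + t` from `u`. -/
structure CanonicalMap (M : MetricGraph) (LG : LineGraphOf M) where
  /-- the underlying map on points -/
  h : LG.L.X → M.X
  h_halfEdge : ∀ (a b : LG.L.V) (hab : LG.L.G.Adj a b) (u w : M.V) (huw : M.G.Adj u w),
    (LG.vEquiv a : Sym2 M.V) = s(u, w) → w ∈ (LG.vEquiv b : Sym2 M.V) →
    ∀ t ∈ Set.Icc (0 : ℝ) (M.ℓ (LG.vEquiv a : Sym2 M.V) / 2),
      h (LG.L.param a b hab t) =
        M.param u w huw (M.ℓ (LG.vEquiv a : Sym2 M.V) / 2 + t)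

end

section Aux

variable {M : MetricGraph}

lemma MG.dist_param_le {u v : M.V} (h : M.G.Adj u v)
    {t r : ℝ} (ht : t ∈ Set.Icc 0 (M.ℓ s(u, v))) (hr : r ∈ Set.Icc 0 (M.ℓ s(u, v))) :
    dist (M.param u v h t) (M.param u v h r) ≤ |t - r| := by
  rw [M.dist_eq u v h t ht (M.param u v h r)]
  apply csInf_le
  · refine ⟨0, ?_⟩
    intro z hz
    simp only [Set.mem_union, Set.mem_insert_iff, Set.mem_singleton_iff,
      Set.mem_setOf_eq] at hz
    rcases hz with (rfl | rfl) | ⟨r', _, _, rfl⟩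
    · have := dist_nonneg (x := M.ι u) (y := M.param u v h r); linarith [ht.1]
    · have := dist_nonneg (x := M.ι v) (y := M.param u v h r); linarith [ht.2]
    · exact abs_nonneg _
  · exact Or.inr ⟨r, hr, rfl, rfl⟩

lemma MG.param_end {u v : M.V} (h : M.G.Adj u v) :
    M.param u v h (M.ℓ s(u, v)) = M.ι v := by
  have h1 := M.param_symm u v h 0
  rw [sub_zero, M.param_zero v u h.symm] at h1
  exact h1.symm

variable {LG : LineGraphOf M} (hm : CanonicalMap M LG)

lemma MG.key (a b : LG.L.V) (hab : LG.L.G.Adj a b)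
    {t r : ℝ} (ht : t ∈ Set.Icc (0 : ℝ) (LG.L.ℓ s(a, b)))
    (hr : r ∈ Set.Icc (0 : ℝ) (LG.L.ℓ s(a, b))) :
    dist (hm.h (LG.L.param a b hab t)) (hm.h (LG.L.param a b hab r)) ≤ |t - r| := by
  obtain ⟨hne, v, hva, hvb⟩ := (LG.adj_iff a b).1 hab
  obtain ⟨u, hea'⟩ := Sym2.mem_iff_exists.1 hva
  have hea : (LG.vEquiv a : Sym2 M.V) = s(u, v) := by rw [hea', Sym2.eq_swap]
  have huv : M.G.Adj u v := by
    have h2 := (LG.vEquiv a).2; rw [hea] at h2; exact (SimpleGraph.mem_edgeSet _).1 h2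
  obtain ⟨u', heb'⟩ := Sym2.mem_iff_exists.1 hvb
  have heb : (LG.vEquiv b : Sym2 M.V) = s(u', v) := by rw [heb', Sym2.eq_swap]
  have hu'v : M.G.Adj u' v := by
    have h2 := (LG.vEquiv b).2; rw [heb] at h2; exact (SimpleGraph.mem_edgeSet _).1 h2
  set la := M.ℓ (LG.vEquiv a : Sym2 M.V) with hla_def
  set lb := M.ℓ (LG.vEquiv b : Sym2 M.V) with hlb_def
  have hlL : LG.L.ℓ s(a, b) = (la + lb) / 2 := LG.len_eq a b hab
  have hla : 0 < la := M.ℓ_pos _ (LG.vEquiv a).2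
  have hlb : 0 < lb := M.ℓ_pos _ (LG.vEquiv b).2
  have hluv : M.ℓ s(u, v) = la := by rw [hla_def, hea]
  have hlu'v : M.ℓ s(u', v) = lb := by rw [hlb_def, heb]
  have hxA : ∀ s ∈ Set.Icc (0 : ℝ) (la / 2),
      hm.h (LG.L.param a b hab s) = M.param u v huv (la / 2 + s) :=
    fun s hs => hm.h_halfEdge a b hab u v huv hea hvb s hs
  have hxB : ∀ s ∈ Set.Icc (0 : ℝ) (lb / 2),
      hm.h (LG.L.param b a hab.symm s) = M.param u' v hu'v (lb / 2 + s) :=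
    fun s hs => hm.h_halfEdge b a hab.symm u' v hu'v heb hva s hs
  have hswap : ∀ s : ℝ, LG.L.param a b hab s
      = LG.L.param b a hab.symm (LG.L.ℓ s(a, b) - s) := by
    intro s
    rw [LG.L.param_symm a b hab (LG.L.ℓ s(a, b) - s)]
    ring_nf
  have hiv : M.param u v huv la = M.ι v := by rw [← hluv]; exact MG.param_end huv
  have hiv' : M.param u' v hu'v lb = M.ι v := by rw [← hlu'v]; exact MG.param_end hu'v
  rw [hlL] at ht hr
  -- inner claim assuming t ≤ r
  have claim : ∀ t' r', t' ∈ Set.Icc (0 : ℝ) ((la + lb) / 2) →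
      r' ∈ Set.Icc (0 : ℝ) ((la + lb) / 2) → t' ≤ r' →
      dist (hm.h (LG.L.param a b hab t')) (hm.h (LG.L.param a b hab r')) ≤ r' - t' := by
    intro t' r' ht' hr' htr
    rcases le_or_gt r' (la / 2) with h1 | h1
    · rw [hxA t' ⟨ht'.1, le_trans htr h1⟩, hxA r' ⟨le_trans ht'.1 htr, h1⟩]
      have hb := MG.dist_param_le huv (t := la / 2 + t') (r := la / 2 + r')
        ⟨by linarith [ht'.1], by rw [hluv]; linarith⟩
        ⟨by linarith [ht'.1, htr], by rw [hluv]; linarith⟩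
      calc dist (M.param u v huv (la / 2 + t')) (M.param u v huv (la / 2 + r'))
          ≤ |la / 2 + t' - (la / 2 + r')| := hb
        _ = r' - t' := by rw [abs_sub_comm]; rw [abs_of_nonneg (by linarith)]; ring
    rcases le_or_gt (la / 2) t' with h2 | h2
    · rw [hswap t', hswap r', hlL]
      rw [hxB _ ⟨by linarith [ht'.2], by linarith⟩,
          hxB _ ⟨by linarith [hr'.2], by linarith [le_trans h2 htr]⟩]
      have hb := MG.dist_param_le hu'v
        (t := lb / 2 + ((la + lb) / 2 - t')) (r := lb / 2 + ((la + lb) / 2 - r'))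
        ⟨by linarith [ht'.2], by rw [hlu'v]; linarith⟩
        ⟨by linarith [hr'.2], by rw [hlu'v]; linarith [le_trans h2 htr]⟩
      calc dist (M.param u' v hu'v (lb / 2 + ((la + lb) / 2 - t')))
            (M.param u' v hu'v (lb / 2 + ((la + lb) / 2 - r')))
          ≤ _ := hb
        _ = r' - t' := by rw [abs_of_nonneg (by linarith)]; ring
    · -- t' < la/2 < r'
      have e1 : hm.h (LG.L.param a b hab t') = M.param u v huv (la / 2 + t') :=
        hxA t' ⟨ht'.1, le_of_lt h2⟩
      have e2 : hm.h (LG.L.param a b hab r')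
          = M.param u' v hu'v (lb / 2 + ((la + lb) / 2 - r')) := by
        rw [hswap r', hlL]
        exact hxB _ ⟨by linarith [hr'.2], by linarith⟩
      rw [e1, e2]
      have d1 : dist (M.param u v huv (la / 2 + t')) (M.ι v) ≤ la / 2 - t' := by
        rw [← hiv]
        have hb := MG.dist_param_le huv (t := la / 2 + t') (r := la)
          ⟨by linarith [ht'.1], by rw [hluv]; linarith⟩
          ⟨by linarith, by rw [hluv]⟩
        calc dist (M.param u v huv (la / 2 + t')) (M.param u v huv la) ≤ _ := hb
          _ = la / 2 - t' := by rw [abs_of_nonpos (by linarith)]; ring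
      have d2 : dist (M.ι v) (M.param u' v hu'v (lb / 2 + ((la + lb) / 2 - r')))
          ≤ r' - la / 2 := by
        rw [← hiv', dist_comm]
        have hb := MG.dist_param_le hu'v (t := lb / 2 + ((la + lb) / 2 - r')) (r := lb)
          ⟨by linarith [hr'.2], by rw [hlu'v]; linarith⟩
          ⟨by linarith, by rw [hlu'v]⟩
        calc dist (M.param u' v hu'v (lb / 2 + ((la + lb) / 2 - r')))
              (M.param u' v hu'v lb) ≤ _ := hb
          _ = r' - la / 2 := by rw [abs_of_nonpos (by linarith)]; ring
      calc dist (M.param u v huv (la / 2 + t'))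
            (M.param u' v hu'v (lb / 2 + ((la + lb) / 2 - r')))
          ≤ _ + _ := dist_triangle _ (M.ι v) _
        _ ≤ (la / 2 - t') + (r' - la / 2) := add_le_add d1 d2
        _ = r' - t' := by ring
  rcases le_total t r with h | h
  · rw [abs_sub_comm, abs_of_nonneg (by linarith)]
    exact claim t r ht hr h
  · rw [abs_of_nonneg (by linarith), dist_comm]
    exact claim r t hr ht h

lemma MG.key_zero (a b : LG.L.V) (hab : LG.L.G.Adj a b)
    {t : ℝ} (ht : t ∈ Set.Icc (0 : ℝ) (LG.L.ℓ s(a, b))) :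
    dist (hm.h (LG.L.param a b hab t)) (hm.h (LG.L.ι a)) ≤ t := by
  have h0 : (0 : ℝ) ∈ Set.Icc (0 : ℝ) (LG.L.ℓ s(a, b)) := ⟨le_refl _, le_trans ht.1 ht.2⟩
  have := MG.key hm a b hab ht h0
  rw [LG.L.param_zero a b hab, sub_zero, abs_of_nonneg ht.1] at this
  exact this

lemma MG.key_end (a b : LG.L.V) (hab : LG.L.G.Adj a b)
    {t : ℝ} (ht : t ∈ Set.Icc (0 : ℝ) (LG.L.ℓ s(a, b))) :
    dist (hm.h (LG.L.param a b hab t)) (hm.h (LG.L.ι b)) ≤ LG.L.ℓ s(a, b) - t := by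
  have hl : (LG.L.ℓ s(a, b)) ∈ Set.Icc (0 : ℝ) (LG.L.ℓ s(a, b)) :=
    ⟨le_trans ht.1 ht.2, le_refl _⟩
  have := MG.key hm a b hab ht hl
  rw [MG.param_end hab, abs_of_nonpos (by linarith [ht.2])] at this
  linarith

lemma MG.walk_bound (p q : LG.L.V) (w : LG.L.G.Walk p q) :
    dist (hm.h (LG.L.ι p)) (hm.h (LG.L.ι q)) ≤ (w.edges.map LG.L.ℓ).sum := by
  induction w with
  | nil => simp
  | @cons p c q h' w' ih =>
    rw [SimpleGraph.Walk.edges_cons, List.map_cons, List.sum_cons]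
    have hl : (0 : ℝ) ≤ LG.L.ℓ s(p, c) :=
      le_of_lt (LG.L.ℓ_pos _ ((SimpleGraph.mem_edgeSet _).2 h'))
    have step : dist (hm.h (LG.L.ι p)) (hm.h (LG.L.ι c)) ≤ LG.L.ℓ s(p, c) := by
      have := MG.key_end hm p c h' (t := 0) ⟨le_refl _, hl⟩
      rw [LG.L.param_zero, sub_zero] at this
      exact this
    calc dist (hm.h (LG.L.ι p)) (hm.h (LG.L.ι q))
        ≤ dist (hm.h (LG.L.ι p)) (hm.h (LG.L.ι c)) + dist (hm.h (LG.L.ι c)) (hm.h (LG.L.ι q)) :=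
          dist_triangle _ _ _
      _ ≤ LG.L.ℓ s(p, c) + (w'.edges.map LG.L.ℓ).sum := add_le_add step ih

lemma MG.vert (p q : LG.L.V) :
    dist (hm.h (LG.L.ι p)) (hm.h (LG.L.ι q)) ≤ dist (LG.L.ι p) (LG.L.ι q) := by
  rw [LG.L.dist_vertex p q]
  refine le_csInf ?_ ?_
  · obtain ⟨w⟩ := LG.L.conn.preconnected p q
    exact ⟨_, w, rfl⟩
  · rintro d ⟨w, rfl⟩
    exact MG.walk_bound hm p q w

lemma MG.pt_vert (y : LG.L.X) (a : LG.L.V) :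
    dist (hm.h y) (hm.h (LG.L.ι a)) ≤ dist y (LG.L.ι a) := by
  obtain ⟨c, d, hcd, s, hs, rfl⟩ := LG.L.cover y
  rw [LG.L.dist_eq c d hcd s hs (LG.L.ι a)]
  refine le_csInf ⟨_, Set.mem_union_left _ (Set.mem_insert _ _)⟩ ?_
  intro z hz
  simp only [Set.mem_union, Set.mem_insert_iff, Set.mem_singleton_iff,
    Set.mem_setOf_eq] at hz
  rcases hz with (rfl | rfl) | ⟨r, hr, hy, rfl⟩
  · calc dist (hm.h (LG.L.param c d hcd s)) (hm.h (LG.L.ι a))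
        ≤ dist (hm.h (LG.L.param c d hcd s)) (hm.h (LG.L.ι c))
            + dist (hm.h (LG.L.ι c)) (hm.h (LG.L.ι a)) := dist_triangle _ _ _
      _ ≤ s + dist (LG.L.ι c) (LG.L.ι a) :=
          add_le_add (MG.key_zero hm c d hcd hs) (MG.vert hm c a)
  · calc dist (hm.h (LG.L.param c d hcd s)) (hm.h (LG.L.ι a))
        ≤ dist (hm.h (LG.L.param c d hcd s)) (hm.h (LG.L.ι d))
            + dist (hm.h (LG.L.ι d)) (hm.h (LG.L.ι a)) := dist_triangle _ _ _
      _ ≤ (LG.L.ℓ s(c, d) - s) + dist (LG.L.ι d) (LG.L.ι a) :=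
          add_le_add (MG.key_end hm c d hcd hs) (MG.vert hm d a)
  · rw [hy]
    exact MG.key hm c d hcd hs hr

end Aux

/-- The canonical map `h : L(G) → G` is 1-Lipschitz:
`d_G(h(x), h(y)) ≤ d_{L(G)}(x, y)` for all `x, y ∈ L(G)`. -/
theorem canonicalMap_lipschitz (M : MetricGraph) (LG : LineGraphOf M)
    (hm : CanonicalMap M LG) (x y : LG.L.X) :
    dist (hm.h x) (hm.h y) ≤ dist x y := by
  obtain ⟨a, b, hab, t, ht, rfl⟩ := LG.L.cover x
  rw [LG.L.dist_eq a b hab t ht y]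
  refine le_csInf ⟨_, Set.mem_union_left _ (Set.mem_insert _ _)⟩ ?_
  intro z hz
  simp only [Set.mem_union, Set.mem_insert_iff, Set.mem_singleton_iff,
    Set.mem_setOf_eq] at hz
  rcases hz with (rfl | rfl) | ⟨r, hr, hy, rfl⟩
  · calc dist (hm.h (LG.L.param a b hab t)) (hm.h y)
        ≤ dist (hm.h (LG.L.param a b hab t)) (hm.h (LG.L.ι a))
            + dist (hm.h (LG.L.ι a)) (hm.h y) := dist_triangle _ _ _
      _ ≤ t + dist (LG.L.ι a) y := by
          refine add_le_add (MG.key_zero hm a b hab ht) ?_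
          rw [dist_comm (hm.h (LG.L.ι a)), dist_comm (LG.L.ι a)]
          exact MG.pt_vert hm y a
  · calc dist (hm.h (LG.L.param a b hab t)) (hm.h y)
        ≤ dist (hm.h (LG.L.param a b hab t)) (hm.h (LG.L.ι b))
            + dist (hm.h (LG.L.ι b)) (hm.h y) := dist_triangle _ _ _
      _ ≤ (LG.L.ℓ s(a, b) - t) + dist (LG.L.ι b) y := by
          refine add_le_add (MG.key_end hm a b hab ht) ?_
          rw [dist_comm (hm.h (LG.L.ι b)), dist_comm (LG.L.ι b)]
          exact MG.pt_vert hm y b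
  · rw [hy]
    exact MG.key hm a b hab ht hr
end

section
/- Let G be a graph (simple, connected, locally finite, with edges of arbitrary lengths), L(G) its line graph, and h : L(G) → G the canonical map. For every x, y ∈ L(G), d_{L(G)}(x, y) ≤ d_G(h(x), h(y)) + 2 l_max, where l_max := sup_{e ∈ E(G)} L(e). -/
open Metric
open scoped ENNReal

/-! A point `x` of `L(G)` lies within `L(e)/2` of a vertex `V_e` of `L(G)` in a strong sense:
for some endpoint `w` of `e`, `d(x, V_e) + d(h x, w) ≤ L(e)/2`, since `h` maps the half-edge
of `L(G)` starting at `V_e` isometrically onto the half of `e` ending at `w`. A walk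
`w = v₀, …, vₙ = w'` in `G` lifts to the path `V_e, V_{[v₀v₁]}, …, V_{[vₙ₋₁vₙ]}, V_{e'}` in `L(G)`,
whose length is at most that of the walk plus `L(e)/2 + L(e')/2`. Chaining these estimates costs
`L(e) + L(e') ≤ 2 l_max`. -/

namespace MetricGraph

variable (M : MetricGraph)

def walkLength {u v : M.V} (W : M.G.Walk u v) : ℝ :=
  (W.edges.map M.ℓ).sum

variable {M}

lemma walkLength_cons {u v w : M.V} (h : M.G.Adj u v) (W : M.G.Walk v w) :
    M.walkLength (.cons h W) = M.ℓ s(u, v) + M.walkLength W := by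
  simp [walkLength]

lemma walkLength_nonneg {u v : M.V} (W : M.G.Walk u v) : 0 ≤ M.walkLength W :=
  List.sum_nonneg fun _ hx => by
    obtain ⟨e, he, rfl⟩ := List.mem_map.1 hx
    exact (M.ℓ_pos e (W.edges_subset_edgeSet he)).le

lemma dist_le_walkLength {u v : M.V} (W : M.G.Walk u v) :
    dist (M.ι u) (M.ι v) ≤ M.walkLength W := by
  rw [M.dist_vertex]
  exact csInf_le ⟨0, by rintro _ ⟨W', rfl⟩; exact M.walkLength_nonneg W'⟩ ⟨W, rfl⟩

lemma le_dist_of_forall_le_walkLength {u v : M.V} {c : ℝ}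
    (h : ∀ W : M.G.Walk u v, c ≤ M.walkLength W) : c ≤ dist (M.ι u) (M.ι v) := by
  rw [M.dist_vertex]
  obtain ⟨W⟩ := M.conn.preconnected u v
  exact le_csInf ⟨_, W, rfl⟩ (by rintro _ ⟨W, rfl⟩; exact h W)

lemma dist_le_of_adj {u v : M.V} (h : M.G.Adj u v) : dist (M.ι u) (M.ι v) ≤ M.ℓ s(u, v) := by
  simpa [walkLength] using M.dist_le_walkLength (.cons h .nil)

lemma dist_param_le {u v : M.V} (h : M.G.Adj u v) {t : ℝ} (ht : t ∈ Set.Icc 0 (M.ℓ s(u, v))) :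
    dist (M.param u v h t) (M.ι u) ≤ t := by
  rw [M.dist_eq u v h t ht]
  refine csInf_le ⟨0, ?_⟩ (Or.inl (Or.inl (by simp)))
  rintro d ((rfl | rfl) | ⟨r, -, -, rfl⟩)
  · exact add_nonneg ht.1 dist_nonneg
  · exact add_nonneg (sub_nonneg.2 ht.2) dist_nonneg
  · exact abs_nonneg _

lemma ofReal_ℓ_le_lmax (e : M.G.edgeSet) : ENNReal.ofReal (M.ℓ e) ≤ M.lmax :=
  le_iSup (fun e : M.G.edgeSet => ENNReal.ofReal (M.ℓ e)) e

end MetricGraph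

namespace LineGraphOf

variable {M : MetricGraph} (LG : LineGraphOf M)

lemma dist_le_of_mem_of_mem {a b : LG.L.V} {w : M.V} (ha : w ∈ (LG.vEquiv a : Sym2 M.V))
    (hb : w ∈ (LG.vEquiv b : Sym2 M.V)) :
    dist (LG.L.ι a) (LG.L.ι b) ≤
      M.ℓ (LG.vEquiv a : Sym2 M.V) / 2 + M.ℓ (LG.vEquiv b : Sym2 M.V) / 2 := by
  rcases eq_or_ne a b with rfl | hne
  · linarith [dist_self (LG.L.ι a), M.ℓ_pos _ (LG.vEquiv a).2]
  · have hab : LG.L.G.Adj a b := (LG.adj_iff a b).2 ⟨hne, w, ha, hb⟩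
    linarith [LG.L.dist_le_of_adj hab, LG.len_eq a b hab]

lemma dist_le_add_walkLength {w w' : M.V} (W : M.G.Walk w w') {a c : LG.L.V}
    (ha : w ∈ (LG.vEquiv a : Sym2 M.V)) (hc : w' ∈ (LG.vEquiv c : Sym2 M.V)) :
    dist (LG.L.ι a) (LG.L.ι c) ≤
      M.ℓ (LG.vEquiv a : Sym2 M.V) / 2 + M.walkLength W + M.ℓ (LG.vEquiv c : Sym2 M.V) / 2 := by
  induction W generalizing a with
  | nil => simpa [MetricGraph.walkLength] using LG.dist_le_of_mem_of_mem ha hc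
  | @cons u v _ huv W ih =>
    set b := LG.vEquiv.symm ⟨s(u, v), huv⟩
    have hb : (LG.vEquiv b : Sym2 M.V) = s(u, v) := by simp [b]
    have hab := LG.dist_le_of_mem_of_mem ha (hb ▸ Sym2.mem_mk_left u v)
    have hbc := ih (hb ▸ Sym2.mem_mk_right u v) hc
    rw [hb] at hab hbc
    rw [MetricGraph.walkLength_cons]
    linarith [dist_triangle (LG.L.ι a) (LG.L.ι b) (LG.L.ι c)]

lemma dist_le_add_dist {a c : LG.L.V} {w w' : M.V} (ha : w ∈ (LG.vEquiv a : Sym2 M.V))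
    (hc : w' ∈ (LG.vEquiv c : Sym2 M.V)) :
    dist (LG.L.ι a) (LG.L.ι c) ≤
      M.ℓ (LG.vEquiv a : Sym2 M.V) / 2 + dist (M.ι w) (M.ι w') +
        M.ℓ (LG.vEquiv c : Sym2 M.V) / 2 := by
  have := M.le_dist_of_forall_le_walkLength (u := w) (v := w')
    (c := dist (LG.L.ι a) (LG.L.ι c) - M.ℓ (LG.vEquiv a : Sym2 M.V) / 2 -
      M.ℓ (LG.vEquiv c : Sym2 M.V) / 2)
    fun W => by linarith [LG.dist_le_add_walkLength W ha hc]
  linarith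

end LineGraphOf

namespace CanonicalMap

variable {M : MetricGraph} {LG : LineGraphOf M} (hm : CanonicalMap M LG)

lemma dist_add_dist_le_of_mem_Icc {a b : LG.L.V} (hab : LG.L.G.Adj a b) {w : M.V}
    (ha : w ∈ (LG.vEquiv a : Sym2 M.V)) (hb : w ∈ (LG.vEquiv b : Sym2 M.V)) {t : ℝ}
    (ht : t ∈ Set.Icc 0 (M.ℓ (LG.vEquiv a : Sym2 M.V) / 2)) :
    dist (LG.L.param a b hab t) (LG.L.ι a) + dist (hm.h (LG.L.param a b hab t)) (M.ι w) ≤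
      M.ℓ (LG.vEquiv a : Sym2 M.V) / 2 := by
  obtain ⟨u, hwu⟩ := Sym2.mem_iff_exists.1 ha
  have hua : (LG.vEquiv a : Sym2 M.V) = s(u, w) := hwu.trans Sym2.eq_swap
  have huw : M.G.Adj u w := by simpa [hua] using (LG.vEquiv a).2
  have hℓ : M.ℓ s(w, u) = M.ℓ (LG.vEquiv a : Sym2 M.V) := by rw [hwu]
  have hx : hm.h (LG.L.param a b hab t) =
      M.param w u huw.symm (M.ℓ (LG.vEquiv a : Sym2 M.V) / 2 - t) := by
    rw [hm.h_halfEdge a b hab u w huw hua hb t ht, M.param_symm u w huw, ← hua]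
    congr 1
    ring
  have hxa : dist (LG.L.param a b hab t) (LG.L.ι a) ≤ t :=
    LG.L.dist_param_le hab ⟨ht.1, by
      linarith [ht.2, LG.len_eq a b hab, M.ℓ_pos _ (LG.vEquiv b).2]⟩
  have hxw : dist (hm.h (LG.L.param a b hab t)) (M.ι w) ≤
      M.ℓ (LG.vEquiv a : Sym2 M.V) / 2 - t :=
    hx ▸ M.dist_param_le huw.symm ⟨by linarith [ht.2], by linarith [ht.1, ht.2, hℓ]⟩
  linarith

lemma exists_dist_add_dist_le (x : LG.L.X) :
    ∃ (a : LG.L.V) (w : M.V), w ∈ (LG.vEquiv a : Sym2 M.V) ∧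
      dist x (LG.L.ι a) + dist (hm.h x) (M.ι w) ≤ M.ℓ (LG.vEquiv a : Sym2 M.V) / 2 := by
  obtain ⟨a, b, hab, t, ht, rfl⟩ := LG.L.cover x
  obtain ⟨-, w, ha, hb⟩ := (LG.adj_iff a b).1 hab
  rcases le_total t (M.ℓ (LG.vEquiv a : Sym2 M.V) / 2) with hta | hta
  · exact ⟨a, w, ha, hm.dist_add_dist_le_of_mem_Icc hab ha hb ⟨ht.1, hta⟩⟩
  · have hx : LG.L.param a b hab t = LG.L.param b a hab.symm (LG.L.ℓ s(a, b) - t) := by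
      rw [LG.L.param_symm a b hab, sub_sub_cancel]
    have hℓ := LG.len_eq a b hab
    rw [hx]
    exact ⟨b, w, hb, hm.dist_add_dist_le_of_mem_Icc hab.symm hb ha
      ⟨by linarith [ht.2], by linarith [ht.1]⟩⟩

end CanonicalMap

/-- For every `x, y ∈ L(G)`,
`d_{L(G)}(x, y) ≤ d_G(h(x), h(y)) + 2 l_max`, where `l_max = sup_{e ∈ E(G)} L(e)`. -/
theorem canonicalMap_dist_le (M : MetricGraph) (LG : LineGraphOf M)
    (hm : CanonicalMap M LG) (x y : LG.L.X) :
    edist x y ≤ edist (hm.h x) (hm.h y) + 2 * M.lmax := by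
  obtain ⟨a, w, ha, hx⟩ := hm.exists_dist_add_dist_le x
  obtain ⟨c, w', hc, hy⟩ := hm.exists_dist_add_dist_le y
  have hdist : dist x y ≤
      dist (hm.h x) (hm.h y) + M.ℓ (LG.vEquiv a : Sym2 M.V) + M.ℓ (LG.vEquiv c : Sym2 M.V) := by
    linarith [dist_triangle4 x (LG.L.ι a) (LG.L.ι c) y, LG.dist_le_add_dist ha hc,
      dist_triangle4 (M.ι w) (hm.h x) (hm.h y) (M.ι w'), dist_comm y (LG.L.ι c),
      dist_comm (M.ι w) (hm.h x)]
  calc edist x y = ENNReal.ofReal (dist x y) := edist_dist x y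
    _ ≤ ENNReal.ofReal (dist (hm.h x) (hm.h y)) + ENNReal.ofReal (M.ℓ (LG.vEquiv a : Sym2 M.V)) +
          ENNReal.ofReal (M.ℓ (LG.vEquiv c : Sym2 M.V)) :=
      (ENNReal.ofReal_le_ofReal hdist).trans
        (ENNReal.ofReal_add_le.trans (add_le_add_left ENNReal.ofReal_add_le _))
    _ ≤ edist (hm.h x) (hm.h y) + M.lmax + M.lmax := by
      rw [edist_dist]
      gcongr <;> exact M.ofReal_ℓ_le_lmax _
    _ = edist (hm.h x) (hm.h y) + 2 * M.lmax := by rw [two_mul, add_assoc]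
end

section
/- Let G be a graph (simple, connected, locally finite) in which every edge has length k, L(G) its line graph, and h : L(G) → G the canonical map. If γ* is a geodesic of L(G) joining x and y with x, y ∈ PM_LV(L(G)), then h(γ*) is the union of three geodesics γ₁, γ₂, γ₃ of G with h(x) ∈ γ₁, h(y) ∈ γ₃, and 0 ≤ L(γ₁), L(γ₃) ≤ k/2. -/
open Metric
open scoped ENNReal

section Toolbox

namespace MetricGraph

variable {N : MetricGraph} {K : ℝ}

/-- Uniform edge lengths. -/
def Uniform (N : MetricGraph) (K : ℝ) : Prop := ∀ e ∈ N.G.edgeSet, N.ℓ e = K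

lemma Uniform.len (hu : Uniform N K) {u v : N.V} (h : N.G.Adj u v) :
    N.ℓ s(u, v) = K := hu _ (N.G.mem_edgeSet.mpr h)

lemma walk_sum_eq (hu : Uniform N K) {u v : N.V} (w : N.G.Walk u v) :
    (w.edges.map N.ℓ).sum = w.length * K := by
  have h : ∀ x ∈ w.edges.map N.ℓ, x = K := by
    intro x hx
    obtain ⟨e, he, rfl⟩ := List.mem_map.1 hx
    exact hu e (w.edges_subset_edgeSet he)
  rw [List.sum_eq_card_nsmul _ K h, List.length_map, w.length_edges, nsmul_eq_mul]

lemma dist_vertex_nonneg_mem (hu : Uniform N K) (hK : 0 ≤ K) {u v : N.V}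
    {L : ℝ} (hL : L ∈ { L : ℝ | ∃ w : N.G.Walk u v, L = (w.edges.map N.ℓ).sum }) :
    0 ≤ L := by
  obtain ⟨w, rfl⟩ := hL
  rw [walk_sum_eq hu]
  positivity

lemma dist_vertex_ge (hu : Uniform N K) (hK : 0 < K) {u v : N.V} (huv : u ≠ v) :
    K ≤ dist (N.ι u) (N.ι v) := by
  rw [N.dist_vertex u v]
  apply le_csInf
  · obtain ⟨w⟩ := N.conn u v
    exact ⟨_, w, rfl⟩
  · rintro L ⟨w, rfl⟩
    rw [walk_sum_eq hu]
    have : 1 ≤ w.length := by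
      rcases Nat.eq_zero_or_pos w.length with h | h
      · exact absurd (w.eq_of_length_eq_zero h) huv
      · exact h
    calc K = 1 * K := (one_mul K).symm
    _ ≤ w.length * K := by
      apply mul_le_mul_of_nonneg_right _ hK.le
      exact_mod_cast this

lemma dist_vertex_le_of_adj (hu : Uniform N K) (hK : 0 < K) {u v : N.V} (h : N.G.Adj u v) :
    dist (N.ι u) (N.ι v) ≤ K := by
  rw [N.dist_vertex u v]
  have hmem : K ∈ { L : ℝ | ∃ w : N.G.Walk u v, L = (w.edges.map N.ℓ).sum } := by
    refine ⟨SimpleGraph.Walk.cons h SimpleGraph.Walk.nil, ?_⟩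
    simp [hu.len h]
  exact csInf_le ⟨0, fun L hL => dist_vertex_nonneg_mem hu hK.le hL⟩ hmem

lemma param_len (hu : Uniform N K) {u v : N.V} (h : N.G.Adj u v) :
    N.param u v h K = N.ι v := by
  have := N.param_symm u v h 0
  rw [N.param_zero v u h.symm, sub_zero, hu.len h] at this
  exact this.symm

lemma param_flip (hu : Uniform N K) {u v : N.V} (h : N.G.Adj u v) (t : ℝ) :
    N.param v u h.symm t = N.param u v h (K - t) := by
  have := N.param_symm u v h t
  rwa [hu.len h] at this

end MetricGraph

end Toolbox
section Toolbox2

lemma sInf_eq_of_mem_of_forall_le {S : Set ℝ} {a : ℝ} (h1 : a ∈ S) (h2 : ∀ x ∈ S, a ≤ x) :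
    sInf S = a :=
  le_antisymm (csInf_le ⟨a, h2⟩ h1) (le_csInf ⟨a, h1⟩ h2)

namespace MetricGraph

variable {N : MetricGraph} {K : ℝ}

lemma dist_eq' (hu : Uniform N K) {u v : N.V} (h : N.G.Adj u v) {t : ℝ}
    (ht : t ∈ Set.Icc 0 K) (y : N.X) :
    dist (N.param u v h t) y =
      sInf (({ t + dist (N.ι u) y, (K - t) + dist (N.ι v) y } : Set ℝ) ∪
        { d : ℝ | ∃ r ∈ Set.Icc (0:ℝ) K, y = N.param u v h r ∧ d = |t - r| }) := by
  have h2 := N.dist_eq u v h t (by rw [hu.len h]; exact ht) y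
  rwa [hu.len h] at h2

lemma cover' (hu : Uniform N K) (w : N.X) :
    ∃ (c d : N.V) (h : N.G.Adj c d) (t : ℝ), t ∈ Set.Icc (0:ℝ) K ∧ w = N.param c d h t := by
  obtain ⟨c, d, h, t, ht, hw⟩ := N.cover w
  exact ⟨c, d, h, t, by rwa [hu.len h] at ht, hw⟩

lemma dist_param_left (hu : Uniform N K) (hK : 0 < K) {u v : N.V} (h : N.G.Adj u v)
    {t : ℝ} (ht : t ∈ Set.Icc 0 K) :
    dist (N.param u v h t) (N.ι u) = t := by
  rw [dist_eq' hu h ht (N.ι u)]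
  apply sInf_eq_of_mem_of_forall_le
  · refine Set.mem_union_left _ (Set.mem_insert_iff.mpr (Or.inl ?_))
    simp [dist_self]
  · rintro x ((rfl | rfl) | ⟨r, hr, hy, rfl⟩)
    · simp [dist_self, ht.1]
    · have := dist_vertex_ge hu hK h.symm.ne
      have ht2 := ht.2
      linarith
    · have h0 : N.ι u = N.param u v h 0 := (N.param_zero u v h).symm
      have : r = 0 := by
        apply N.param_injOn u v h (by rw [hu.len h]; exact hr)
          (by rw [hu.len h]; exact ⟨le_refl 0, hK.le⟩)
        rw [← hy, ← h0]
      subst this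
      rw [sub_zero, abs_of_nonneg ht.1]

lemma dist_param_right (hu : Uniform N K) (hK : 0 < K) {u v : N.V} (h : N.G.Adj u v)
    {t : ℝ} (ht : t ∈ Set.Icc 0 K) :
    dist (N.param u v h t) (N.ι v) = K - t := by
  have hflip := param_flip hu h.symm t
  rw [hflip]
  exact dist_param_left hu hK h.symm ⟨by linarith [ht.2], by linarith [ht.1]⟩

lemma interior_ne_vertex (hu : Uniform N K) (hK : 0 < K) {u v : N.V} (h : N.G.Adj u v)
    {t : ℝ} (ht : t ∈ Set.Ioo 0 K) (z : N.V) :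
    N.param u v h t ≠ N.ι z := by
  intro heq
  have htIcc : t ∈ Set.Icc 0 K := ⟨ht.1.le, ht.2.le⟩
  by_cases hz1 : z = u
  · subst hz1
    have := dist_param_left hu hK h htIcc
    rw [heq, dist_self] at this
    exact ht.1.ne this
  by_cases hz2 : z = v
  · subst hz2
    have := dist_param_right hu hK h htIcc
    rw [heq, dist_self] at this
    have := ht.2
    linarith
  · have h1 := dist_param_left hu hK h htIcc
    rw [heq] at h1
    have h2 := dist_vertex_ge hu hK (Ne.symm hz1)
    rw [dist_comm] at h2
    rw [h1] at h2
    linarith [ht.2]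

lemma vertex_on_edge (hu : Uniform N K) (hK : 0 < K) {u v z : N.V} (h : N.G.Adj u v)
    {r : ℝ} (hr : r ∈ Set.Icc 0 K) (hz : N.ι z = N.param u v h r) :
    (z = u ∧ r = 0) ∨ (z = v ∧ r = K) := by
  rcases eq_or_lt_of_le hr.1 with h0 | h0
  · left
    refine ⟨?_, h0.symm⟩
    apply N.ι_inj
    rw [hz, ← h0, N.param_zero]
  rcases eq_or_lt_of_le hr.2 with hKr | hKr
  · right
    refine ⟨?_, hKr⟩
    apply N.ι_inj
    rw [hz, hKr, param_len hu h]
  · exact absurd hz.symm (interior_ne_vertex hu hK h ⟨h0, hKr⟩ z)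

lemma dist_param_other (hu : Uniform N K) (hK : 0 < K) {u v z : N.V} (h : N.G.Adj u v)
    {t : ℝ} (ht : t ∈ Set.Icc 0 K) (hz1 : z ≠ u) (hz2 : z ≠ v) :
    K ≤ dist (N.param u v h t) (N.ι z) := by
  rw [dist_eq' hu h ht (N.ι z)]
  apply le_csInf
  · exact ⟨_, Or.inl (Or.inl rfl)⟩
  · rintro x ((rfl | rfl) | ⟨r, hr, hy, rfl⟩)
    · have := dist_vertex_ge hu hK (Ne.symm hz1)
      linarith [ht.1]
    · have := dist_vertex_ge hu hK (Ne.symm hz2)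
      linarith [ht.2]
    · rcases vertex_on_edge hu hK h hr hy with ⟨hzz, _⟩ | ⟨hzz, _⟩
      · exact absurd hzz hz1
      · exact absurd hzz hz2

lemma dist_within_edge (hu : Uniform N K) (hK : 0 < K) {u v : N.V} (h : N.G.Adj u v)
    {t r : ℝ} (ht : t ∈ Set.Icc 0 K) (hr : r ∈ Set.Icc 0 K) :
    dist (N.param u v h t) (N.param u v h r) = |t - r| := by
  rw [dist_eq' hu h ht _]
  apply sInf_eq_of_mem_of_forall_le
  · right
    exact ⟨r, hr, rfl, rfl⟩
  · rintro x ((rfl | rfl) | ⟨r', hr', hy, rfl⟩)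
    · have h1 : dist (N.ι u) (N.param u v h r) = r := by
        rw [dist_comm]; exact dist_param_left hu hK h hr
      rw [h1]
      have := abs_sub_le_iff.mpr (⟨by linarith [ht.2, hr.1], by linarith [hr.2, ht.1]⟩ :
        t - r ≤ t + r ∧ r - t ≤ t + r)
      -- |t - r| ≤ t + r
      exact this
    · have h1 : dist (N.ι v) (N.param u v h r) = K - r := by
        rw [dist_comm]; exact dist_param_right hu hK h hr
      rw [h1]
      apply abs_sub_le_iff.mpr
      constructor <;> [linarith [ht.2, hr.1]; linarith [hr.2, ht.1]]
    · have : r' = r := by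
        apply N.param_injOn u v h (by rw [hu.len h]; exact hr')
          (by rw [hu.len h]; exact hr)
        exact hy.symm
      subst this
      exact le_refl _

lemma interior_disjoint (hu : Uniform N K) (hK : 0 < K) {u v c d : N.V}
    (h : N.G.Adj u v) (h' : N.G.Adj c d) {t r : ℝ} (ht : t ∈ Set.Ioo 0 K)
    (hr : r ∈ Set.Icc 0 K) (heq : N.param u v h t = N.param c d h' r) :
    s(u, v) = s(c, d) := by
  have htIcc : t ∈ Set.Icc 0 K := ⟨ht.1.le, ht.2.le⟩
  have key : ∀ z : N.V, dist (N.param u v h t) (N.ι z) < K → z = c ∨ z = d := by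
    intro z hz
    by_contra hcon
    push_neg at hcon
    rw [heq] at hz
    exact absurd hz (not_lt.mpr (dist_param_other hu hK h' hr hcon.1 hcon.2))
  have hu' : u = c ∨ u = d := by
    apply key
    rw [dist_param_left hu hK h htIcc]
    exact ht.2
  have hv' : v = c ∨ v = d := by
    apply key
    rw [dist_param_right hu hK h htIcc]
    linarith [ht.1]
  have huv : u ≠ v := h.ne
  rcases hu' with rfl | rfl <;> rcases hv' with rfl | rfl
  · exact absurd rfl huv
  · rfl
  · exact Sym2.eq_swap
  · exact absurd rfl huv

end MetricGraph

end Toolbox2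
section Toolbox3

namespace MetricGraph

variable {N : MetricGraph} {K : ℝ}

lemma half_mem_Icc (hK : 0 < K) : K / 2 ∈ Set.Icc (0:ℝ) K := ⟨by linarith, by linarith⟩

lemma ball_vertex (hu : Uniform N K) (hK : 0 < K) {u : N.V} {w : N.X}
    (hw : dist (N.ι u) w ≤ K / 2) :
    ∃ (v : N.V) (h : N.G.Adj u v), w = N.param u v h (dist (N.ι u) w) := by
  obtain ⟨c, d, h', t, ht, rfl⟩ := cover' hu w
  by_cases hc : u = c
  · subst hc
    have hr : dist (N.ι u) (N.param u d h' t) = t := by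
      rw [dist_comm]; exact dist_param_left hu hK h' ht
    exact ⟨d, h', by rw [hr]⟩
  by_cases hd : u = d
  · subst hd
    have hr : dist (N.ι u) (N.param c u h' t) = K - t := by
      rw [dist_comm]; exact dist_param_right hu hK h' ht
    refine ⟨c, h'.symm, ?_⟩
    rw [hr, param_flip hu h']
    congr 1
    ring
  · exfalso
    have h1 := dist_param_other hu hK h' ht hc hd
    rw [dist_comm] at h1
    linarith

lemma param_reindex (hu : Uniform N K) {a b c d : N.V} (h : N.G.Adj a b)
    (h' : N.G.Adj c d) (hs : s(c, d) = s(a, b)) {t' : ℝ} (ht' : t' ∈ Set.Icc 0 K) :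
    ∃ t ∈ Set.Icc (0:ℝ) K, N.param c d h' t' = N.param a b h t ∧ |t - K/2| = |t' - K/2| := by
  rcases Sym2.eq_iff.mp hs with ⟨h1, h2⟩ | ⟨h1, h2⟩
  · subst h1; subst h2
    exact ⟨t', ht', rfl, rfl⟩
  · subst h1; subst h2
    refine ⟨K - t', ⟨by linarith [ht'.2], by linarith [ht'.1]⟩, param_flip hu h t', ?_⟩
    have he : K - t' - K/2 = -(t' - K/2) := by ring
    rw [he, abs_neg]

lemma midpoint_far (hu : Uniform N K) (hK : 0 < K) {a b c : N.V} (h : N.G.Adj a b)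
    (hc1 : c ≠ a) (hc2 : c ≠ b) :
    K + K / 2 ≤ dist (N.param a b h (K / 2)) (N.ι c) := by
  rw [dist_eq' hu h (half_mem_Icc hK) (N.ι c)]
  apply le_csInf
  · exact ⟨_, Or.inl (Or.inl rfl)⟩
  · rintro x ((rfl | rfl) | ⟨r, hr, hy, rfl⟩)
    · have := dist_vertex_ge hu hK (fun e => hc1 e.symm)
      linarith
    · have := dist_vertex_ge hu hK (fun e => hc2 e.symm)
      linarith
    · rcases vertex_on_edge hu hK h hr hy with ⟨hzz, _⟩ | ⟨hzz, _⟩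
      · exact absurd hzz hc1
      · exact absurd hzz hc2

lemma ball_mid (hu : Uniform N K) (hK : 0 < K) {a b : N.V} (h : N.G.Adj a b) {w : N.X}
    (hw : dist (N.param a b h (K / 2)) w ≤ K / 2) :
    ∃ t ∈ Set.Icc (0:ℝ) K, w = N.param a b h t ∧
      |t - K / 2| = dist (N.param a b h (K / 2)) w := by
  obtain ⟨c, d, h', t', ht', rfl⟩ := cover' hu w
  by_cases hsame : s(c, d) = s(a, b)
  · obtain ⟨t, ht, heq, -⟩ := param_reindex hu h h' hsame ht'
    refine ⟨t, ht, heq, ?_⟩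
    rw [heq, dist_within_edge hu hK h (half_mem_Icc hK) ht, abs_sub_comm]
  · -- different edges
    have hC : { e : ℝ | ∃ r ∈ Set.Icc (0:ℝ) K,
        N.param a b h (K/2) = N.param c d h' r ∧ e = |t' - r| } = ∅ := by
      ext x
      simp only [Set.mem_setOf_eq, Set.mem_empty_iff_false, iff_false]
      rintro ⟨r, hr, hy, rfl⟩
      exact hsame (interior_disjoint hu hK h h'
        ⟨by linarith, by linarith⟩ hr hy).symm
    have hdist : dist (N.param c d h' t') (N.param a b h (K/2)) =
        min (t' + dist (N.ι c) (N.param a b h (K/2)))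
          ((K - t') + dist (N.ι d) (N.param a b h (K/2))) := by
      rw [dist_eq' hu h' ht' _, hC, Set.union_empty, csInf_pair]
    have hcm : ∀ z : N.V, z ≠ a → z ≠ b →
        K + K/2 ≤ dist (N.ι z) (N.param a b h (K/2)) := by
      intro z h1 h2
      rw [dist_comm]
      exact midpoint_far hu hK h h1 h2
    have hzm : ∀ z : N.V, K / 2 ≤ dist (N.ι z) (N.param a b h (K/2)) := by
      intro z
      by_cases h1 : z = a
      · rw [h1, dist_comm, dist_param_left hu hK h (half_mem_Icc hK)]
      by_cases h2 : z = b
      · rw [h2, dist_comm, dist_param_right hu hK h (half_mem_Icc hK)]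
        linarith
      · linarith [hcm z h1 h2]
    rw [dist_comm, hdist] at hw
    have hend : ∀ (z : N.V), z = a ∨ z = b →
        ∃ t ∈ Set.Icc (0:ℝ) K, (N.ι z : N.X) = N.param a b h t ∧
          |t - K / 2| = K / 2 := by
      rintro z (h1 | h1)
      · rw [h1]
        exact ⟨0, ⟨le_refl 0, hK.le⟩, (N.param_zero a b h).symm, by
          rw [abs_of_nonpos] <;> linarith⟩
      · rw [h1]
        exact ⟨K, ⟨hK.le, le_refl K⟩, (param_len hu h).symm, by
          rw [abs_of_nonneg] <;> linarith⟩
    rcases min_le_iff.mp hw with hx1 | hx1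
    · have ht'0 : t' = 0 := le_antisymm (by linarith [hzm c]) ht'.1
      have hca : c = a ∨ c = b := by
        by_contra hcc
        push_neg at hcc
        linarith [hcm c hcc.1 hcc.2]
      obtain ⟨t, ht, heq, habs⟩ := hend c hca
      refine ⟨t, ht, by rw [ht'0, N.param_zero c d h']; exact heq, ?_⟩
      rw [habs, ht'0, N.param_zero c d h', heq,
        dist_within_edge hu hK h (half_mem_Icc hK) ht, abs_sub_comm, habs]
    · have ht'K : t' = K := le_antisymm ht'.2 (by linarith [hzm d])
      have hda : d = a ∨ d = b := by
        by_contra hcc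
        push_neg at hcc
        linarith [hcm d hcc.1 hcc.2]
      obtain ⟨t, ht, heq, habs⟩ := hend d hda
      refine ⟨t, ht, by rw [ht'K, param_len hu h']; exact heq, ?_⟩
      rw [habs, ht'K, param_len hu h', heq,
        dist_within_edge hu hK h (half_mem_Icc hK) ht, abs_sub_comm, habs]

end MetricGraph

end Toolbox3
section Toolbox4

namespace MetricGraph

variable {N : MetricGraph} {K : ℝ}

lemma dist_cross (hu : Uniform N K) (hK : 0 < K) {u v v' : N.V} (h : N.G.Adj u v)
    (h' : N.G.Adj u v') (hvv : v ≠ v') {s e : ℝ} (hs : s ∈ Set.Icc 0 (K/2))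
    (he : e ∈ Set.Ioc 0 (K/2)) :
    dist (N.param u v h s) (N.param u v' h' e) = s + e := by
  have hsK : s ∈ Set.Icc (0:ℝ) K := ⟨hs.1, by linarith [hs.2]⟩
  have heK : e ∈ Set.Icc (0:ℝ) K := ⟨he.1.le, by linarith [he.2]⟩
  rw [dist_eq' hu h hsK _]
  apply sInf_eq_of_mem_of_forall_le
  · refine Set.mem_union_left _ (Set.mem_insert_iff.mpr (Or.inl ?_))
    rw [dist_comm, dist_param_left hu hK h' heK]
  · rintro x ((rfl | rfl) | ⟨r, hr, hy, rfl⟩)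
    · rw [dist_comm, dist_param_left hu hK h' heK]
    · have hvu : v ≠ u := h.symm.ne
      have hd : K ≤ dist (N.param u v' h' e) (N.ι v) :=
        dist_param_other hu hK h' heK hvu hvv
      rw [dist_comm] at hd
      linarith [hs.2, he.2]
    · exfalso
      rcases eq_or_lt_of_le heK.2 with heq | hlt
      · have hy2 : N.param u v' h' e = N.ι v' := by rw [heq, param_len hu h']
        rw [hy2] at hy
        rcases vertex_on_edge hu hK h hr hy with ⟨hz, _⟩ | ⟨hz, _⟩
        · exact h'.ne hz.symm
        · exact hvv hz.symm
      · have hee := interior_disjoint hu hK h' h ⟨he.1, hlt⟩ hr hy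
        rw [Sym2.eq_iff] at hee
        rcases hee with ⟨-, hz⟩ | ⟨hz, hz2⟩
        · exact hvv hz.symm
        · exact h'.ne hz2.symm

lemma step_vertex (hu : Uniform N K) (hK : 0 < K) {γ : ℝ → N.X} {d : ℝ}
    (hiso : ∀ a ∈ Set.Icc (0:ℝ) d, ∀ b ∈ Set.Icc (0:ℝ) d, dist (γ a) (γ b) = |a - b|)
    {u : N.V} (h0 : γ 0 = N.ι u) (hd : K/2 ≤ d) :
    ∃ (v : N.V) (h : N.G.Adj u v), ∀ s ∈ Set.Icc (0:ℝ) (K/2), γ s = N.param u v h s := by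
  have hd0 : (0:ℝ) ≤ d := le_trans (by linarith) hd
  have hmem : ∀ s ∈ Set.Icc (0:ℝ) (K/2), s ∈ Set.Icc (0:ℝ) d :=
    fun s hs => ⟨hs.1, le_trans hs.2 hd⟩
  have hdist : ∀ s ∈ Set.Icc (0:ℝ) (K/2), dist (N.ι u) (γ s) = s := by
    intro s hs
    rw [← h0, hiso 0 ⟨le_refl 0, hd0⟩ s (hmem s hs), abs_sub_comm, sub_zero,
      abs_of_nonneg hs.1]
  have hhalf : (K/2 : ℝ) ∈ Set.Icc (0:ℝ) (K/2) := ⟨by linarith, le_refl _⟩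
  obtain ⟨v, h, hv⟩ := ball_vertex hu hK (le_of_eq (hdist (K/2) hhalf))
  rw [hdist (K/2) hhalf] at hv
  refine ⟨v, h, ?_⟩
  intro s hs
  rcases eq_or_lt_of_le hs.1 with h0s | h0s
  · rw [← h0s, h0, N.param_zero]
  have hle : dist (N.ι u) (γ s) ≤ K / 2 := by rw [hdist s hs]; exact hs.2
  obtain ⟨v₂, h₂, hv₂⟩ := ball_vertex hu hK hle
  rw [hdist s hs] at hv₂
  by_cases hv2v : v₂ = v
  · subst hv2v
    exact hv₂
  · exfalso
    have hdd : dist (γ s) (γ (K/2)) = K/2 - s := by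
      rw [hiso s (hmem s hs) (K/2) (hmem _ hhalf), abs_of_nonpos (by linarith [hs.2])]
      ring
    rw [hv₂, hv, dist_cross hu hK h₂ h hv2v hs ⟨by linarith, le_refl _⟩] at hdd
    linarith

lemma step_mid (hu : Uniform N K) (hK : 0 < K) {γ : ℝ → N.X} {d : ℝ}
    (hiso : ∀ a ∈ Set.Icc (0:ℝ) d, ∀ b ∈ Set.Icc (0:ℝ) d, dist (γ a) (γ b) = |a - b|)
    {a b : N.V} {hab : N.G.Adj a b} (h0 : γ 0 = N.param a b hab (K/2)) (hd : K/2 ≤ d) :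
    ∃ (a' b' : N.V) (h' : N.G.Adj a' b'), s(a', b') = s(a, b) ∧
      N.param a' b' h' (K/2) = γ 0 ∧
      ∀ s ∈ Set.Icc (0:ℝ) (K/2), γ s = N.param a' b' h' (K/2 + s) := by
  have hd0 : (0:ℝ) ≤ d := le_trans (by linarith) hd
  have hmem : ∀ s ∈ Set.Icc (0:ℝ) (K/2), s ∈ Set.Icc (0:ℝ) d :=
    fun s hs => ⟨hs.1, le_trans hs.2 hd⟩
  have hhalf : (K/2 : ℝ) ∈ Set.Icc (0:ℝ) (K/2) := ⟨by linarith, le_refl _⟩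
  have hdist : ∀ s ∈ Set.Icc (0:ℝ) (K/2), dist (N.param a b hab (K/2)) (γ s) = s := by
    intro s hs
    rw [← h0, hiso 0 ⟨le_refl 0, hd0⟩ s (hmem s hs), abs_sub_comm, sub_zero,
      abs_of_nonneg hs.1]
  obtain ⟨te, hte, hgKhalf, habs⟩ := ball_mid hu hK hab (le_of_eq (hdist (K/2) hhalf))
  rw [hdist (K/2) hhalf] at habs
  have hcase : te = K ∨ te = 0 := by
    rcases (abs_eq (by linarith : (0:ℝ) ≤ K/2)).mp habs with h1 | h1
    · left; linarith
    · right; linarith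
  -- generic inner fact : at each s, γ s = param a b (K/2 + s) or (K/2 - s)
  have hinner : ∀ s ∈ Set.Icc (0:ℝ) (K/2), ∃ ts ∈ Set.Icc (0:ℝ) K,
      γ s = N.param a b hab ts ∧ (ts = K/2 + s ∨ ts = K/2 - s) := by
    intro s hs
    have hle : dist (N.param a b hab (K/2)) (γ s) ≤ K / 2 := by
      rw [hdist s hs]; exact hs.2
    obtain ⟨ts, hts, hgs, habs'⟩ := ball_mid hu hK hab hle
    rw [hdist s hs] at habs'
    refine ⟨ts, hts, hgs, ?_⟩
    rcases (abs_eq hs.1).mp habs' with h1 | h1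
    · left; linarith
    · right; linarith
  rcases hcase with hte | hte
  · -- forward orientation: γ s = param a b (K/2 + s)
    rw [hte] at hgKhalf
    refine ⟨a, b, hab, rfl, h0.symm, ?_⟩
    intro s hs
    obtain ⟨ts, hts, hgs, hor⟩ := hinner s hs
    rcases hor with h1 | h1
    · rw [hgs, h1]
    · have hdd : dist (γ s) (γ (K/2)) = K/2 - s := by
        rw [hiso s (hmem s hs) (K/2) (hmem _ hhalf),
          abs_of_nonpos (by linarith [hs.2])]
        ring
      rw [hgs, hgKhalf, dist_within_edge hu hK hab hts ⟨hK.le, le_refl K⟩] at hdd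
      have hs0 : s = 0 := by
        rcases abs_cases (ts - K) with ⟨h2, -⟩ | ⟨h2, -⟩ <;> rw [h2] at hdd <;> linarith
      rw [hs0, add_zero]
      exact h0
  · -- backward orientation: use (b, a)
    rw [hte] at hgKhalf
    have hstart : N.param b a hab.symm (K/2) = γ 0 := by
      rw [param_flip hu hab (K/2), h0]
      congr 1
      ring
    refine ⟨b, a, hab.symm, Sym2.eq_swap, hstart, ?_⟩
    intro s hs
    obtain ⟨ts, hts, hgs, hor⟩ := hinner s hs
    have hflip : ∀ r : ℝ, N.param b a hab.symm (K/2 + r) = N.param a b hab (K/2 - r) := by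
      intro r
      rw [param_flip hu hab]
      congr 1
      ring
    rcases hor with h1 | h1
    · have hdd : dist (γ s) (γ (K/2)) = K/2 - s := by
        rw [hiso s (hmem s hs) (K/2) (hmem _ hhalf),
          abs_of_nonpos (by linarith [hs.2])]
        ring
      rw [hgs, hgKhalf, dist_within_edge hu hK hab hts ⟨le_refl (0:ℝ), hK.le⟩] at hdd
      have hs0 : s = 0 := by
        rcases abs_cases (ts - 0) with ⟨h2, -⟩ | ⟨h2, -⟩ <;> rw [h2] at hdd <;> linarith
      rw [hs0, add_zero, hstart]
    · rw [hgs, h1, hflip s]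

end MetricGraph

end Toolbox4
section Toolbox5

namespace MetricGraph

/-- `γ t` is a vertex. -/
def VAt (N : MetricGraph) (γ : ℝ → N.X) (t : ℝ) : Prop := ∃ u, γ t = N.ι u

/-- `γ t` is the midpoint of an edge. -/
def MAt (N : MetricGraph) (K : ℝ) (γ : ℝ → N.X) (t : ℝ) : Prop :=
  ∃ (a b : N.V) (h : N.G.Adj a b), γ t = N.param a b h (K/2)

variable {N : MetricGraph} {K : ℝ}

lemma not_VAt_and_MAt (hu : Uniform N K) (hK : 0 < K) {γ : ℝ → N.X} {t : ℝ}
    (hV : VAt N γ t) (hM : MAt N K γ t) : False := by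
  obtain ⟨u, hu1⟩ := hV
  obtain ⟨a, b, hab, hm1⟩ := hM
  have heq : N.param a b hab (K/2) = N.ι u := by rw [← hm1, hu1]
  exact interior_ne_vertex hu hK hab ⟨by linarith, by linarith⟩ u heq

lemma midpoint_offset (hu : Uniform N K) (hK : 0 < K) {a b a' b' : N.V}
    (hab : N.G.Adj a b) (h' : N.G.Adj a' b') {t : ℝ} (ht : t ∈ Set.Icc 0 K)
    (heq : N.param a b hab t = N.param a' b' h' (K/2)) : t = K/2 := by
  have hs : s(a', b') = s(a, b) :=
    interior_disjoint hu hK h' hab ⟨by linarith, by linarith⟩ ht heq.symm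
  obtain ⟨t2, ht2, heq2, habs⟩ := param_reindex hu hab h' hs (half_mem_Icc hK)
  have ht2v : t2 = K/2 := by
    have : |t2 - K/2| = 0 := by rw [habs]; simp
    have := abs_eq_zero.mp this
    linarith
  have : t = t2 := by
    apply N.param_injOn a b hab (by rw [hu.len hab]; exact ht)
      (by rw [hu.len hab]; exact ht2)
    rw [heq, heq2]
  rw [this, ht2v]

lemma iso_shift {γ : ℝ → N.X} {d t : ℝ}
    (hiso : ∀ a ∈ Set.Icc (0:ℝ) d, ∀ b ∈ Set.Icc (0:ℝ) d, dist (γ a) (γ b) = |a - b|)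
    (ht : 0 ≤ t) (htd : t ≤ d) :
    ∀ a ∈ Set.Icc (0:ℝ) (d - t), ∀ b ∈ Set.Icc (0:ℝ) (d - t),
      dist (γ (t + a)) (γ (t + b)) = |a - b| := by
  intro a ha b hb
  rw [hiso (t + a) ⟨by linarith [ha.1], by linarith [ha.2]⟩
      (t + b) ⟨by linarith [hb.1], by linarith [hb.2]⟩]
  congr 1
  ring

lemma alt_step_V (hu : Uniform N K) (hK : 0 < K) {γ : ℝ → N.X} {d t : ℝ}
    (hiso : ∀ a ∈ Set.Icc (0:ℝ) d, ∀ b ∈ Set.Icc (0:ℝ) d, dist (γ a) (γ b) = |a - b|)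
    (ht : 0 ≤ t) (htd : t + K/2 ≤ d) (hV : VAt N γ t) : MAt N K γ (t + K/2) := by
  obtain ⟨u, hu1⟩ := hV
  obtain ⟨v, h, hv⟩ := step_vertex hu hK (γ := fun s => γ (t + s))
    (iso_shift hiso ht (by linarith)) (by simpa using hu1) (by linarith)
  exact ⟨u, v, h, hv (K/2) ⟨by linarith, le_refl _⟩⟩

lemma alt_step_M (hu : Uniform N K) (hK : 0 < K) {γ : ℝ → N.X} {d t : ℝ}
    (hiso : ∀ a ∈ Set.Icc (0:ℝ) d, ∀ b ∈ Set.Icc (0:ℝ) d, dist (γ a) (γ b) = |a - b|)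
    (ht : 0 ≤ t) (htd : t + K/2 ≤ d) (hM : MAt N K γ t) : VAt N γ (t + K/2) := by
  obtain ⟨a, b, hab, hm1⟩ := hM
  obtain ⟨a', b', h', -, -, hv⟩ := step_mid hu hK (γ := fun s => γ (t + s))
    (iso_shift hiso ht (by linarith)) (hab := hab) (by simpa using hm1) (by linarith)
  have h2 := hv (K/2) ⟨by linarith, le_refl _⟩
  refine ⟨b', ?_⟩
  rw [h2]
  have : K/2 + K/2 = K := by ring
  rw [this, param_len hu h']

lemma par (hu : Uniform N K) (hK : 0 < K) {γ : ℝ → N.X} {d : ℝ}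
    (hiso : ∀ a ∈ Set.Icc (0:ℝ) d, ∀ b ∈ Set.Icc (0:ℝ) d, dist (γ a) (γ b) = |a - b|) :
    ∀ j : ℕ, (j:ℝ) * (K/2) ≤ d →
      ((VAt N γ 0 ∧ Even j) ∨ (MAt N K γ 0 ∧ ¬Even j) → VAt N γ ((j:ℝ) * (K/2))) ∧
      ((MAt N K γ 0 ∧ Even j) ∨ (VAt N γ 0 ∧ ¬Even j) → MAt N K γ ((j:ℝ) * (K/2))) := by
  intro j
  induction j with
  | zero =>
    intro _
    constructor
    · rintro (⟨hV, -⟩ | ⟨-, hodd⟩)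
      · simpa using hV
      · exact absurd Even.zero hodd
    · rintro (⟨hM, -⟩ | ⟨-, hodd⟩)
      · simpa using hM
      · exact absurd Even.zero hodd
  | succ j ih =>
    intro hj
    have hpos : ((j:ℝ) + 1) * (K/2) = (j:ℝ) * (K/2) + K/2 := by ring
    have hj' : (j:ℝ) * (K/2) ≤ d := by
      have : (j:ℝ) * (K/2) ≤ ((j:ℝ)+1) * (K/2) := by nlinarith [hK]
      push_cast at hj
      linarith
    have hjnn : 0 ≤ (j:ℝ) * (K/2) := by positivity
    have hstep : (j:ℝ) * (K/2) + K/2 ≤ d := by push_cast at hj; linarith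
    have he : ∀ P : Prop, (P ∧ Even (j+1)) ↔ (P ∧ ¬Even j) := by
      intro P
      rw [Nat.even_add_one]
    constructor
    · rintro (⟨hV, hev⟩ | ⟨hM, hodd⟩)
      · -- V at 0 and j+1 even, so j odd, MAt at j, step M→V
        rw [Nat.even_add_one] at hev
        have hMj := (ih hj').2 (Or.inr ⟨hV, hev⟩)
        push_cast
        rw [hpos]
        exact alt_step_M hu hK hiso hjnn hstep hMj
      · rw [Nat.even_add_one, not_not] at hodd
        have hMj := (ih hj').2 (Or.inl ⟨hM, hodd⟩)
        push_cast
        rw [hpos]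
        exact alt_step_M hu hK hiso hjnn hstep hMj
    · rintro (⟨hM, hev⟩ | ⟨hV, hodd⟩)
      · rw [Nat.even_add_one] at hev
        have hVj := (ih hj').1 (Or.inr ⟨hM, hev⟩)
        push_cast
        rw [hpos]
        exact alt_step_V hu hK hiso hjnn hstep hVj
      · rw [Nat.even_add_one, not_not] at hodd
        have hVj := (ih hj').1 (Or.inl ⟨hV, hodd⟩)
        push_cast
        rw [hpos]
        exact alt_step_V hu hK hiso hjnn hstep hVj

lemma spec_at (hu : Uniform N K) (hK : 0 < K) {γ : ℝ → N.X} {d : ℝ}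
    (hiso : ∀ a ∈ Set.Icc (0:ℝ) d, ∀ b ∈ Set.Icc (0:ℝ) d, dist (γ a) (γ b) = |a - b|)
    (h0 : VAt N γ 0 ∨ MAt N K γ 0) (j : ℕ) (hj : (j:ℝ) * (K/2) ≤ d) :
    VAt N γ ((j:ℝ) * (K/2)) ∨ MAt N K γ ((j:ℝ) * (K/2)) := by
  by_cases hev : Even j
  · rcases h0 with hV | hM
    · exact Or.inl ((par hu hK hiso j hj).1 (Or.inl ⟨hV, hev⟩))
    · exact Or.inr ((par hu hK hiso j hj).2 (Or.inl ⟨hM, hev⟩))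
  · rcases h0 with hV | hM
    · exact Or.inr ((par hu hK hiso j hj).2 (Or.inr ⟨hV, hev⟩))
    · exact Or.inl ((par hu hK hiso j hj).1 (Or.inr ⟨hM, hev⟩))

lemma total_length (hu : Uniform N K) (hK : 0 < K) {γ : ℝ → N.X} {d : ℝ} (hd : 0 ≤ d)
    (hiso : ∀ a ∈ Set.Icc (0:ℝ) d, ∀ b ∈ Set.Icc (0:ℝ) d, dist (γ a) (γ b) = |a - b|)
    (h0 : VAt N γ 0 ∨ MAt N K γ 0) (hEnd : VAt N γ d ∨ MAt N K γ d) :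
    ∃ n : ℕ, d = (n:ℝ) * (K/2) := by
  have hK2 : (0:ℝ) < K/2 := by linarith
  set n := ⌊d / (K/2)⌋₊ with hn
  have hn1 : (n:ℝ) * (K/2) ≤ d := by
    have := Nat.floor_le (a := d / (K/2)) (by positivity)
    calc (n:ℝ) * (K/2) ≤ (d / (K/2)) * (K/2) := by
          apply mul_le_mul_of_nonneg_right _ hK2.le
          exact this
    _ = d := by field_simp
  have hn2 : d < ((n:ℝ) + 1) * (K/2) := by
    have := Nat.lt_floor_add_one (d / (K/2))
    calc d = (d / (K/2)) * (K/2) := by field_simp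
    _ < ((n:ℝ) + 1) * (K/2) := by
          apply mul_lt_mul_of_pos_right _ hK2
          exact_mod_cast this
  refine ⟨n, ?_⟩
  by_contra hne
  have hlt : (n:ℝ) * (K/2) < d :=
    lt_of_le_of_ne hn1 (fun h => hne h.symm)
  have hρpos : 0 < d - (n:ℝ) * (K/2) := by linarith
  have hρlt : d - (n:ℝ) * (K/2) < K/2 := by nlinarith [hn2]
  have hdd : dist (γ ((n:ℝ) * (K/2))) (γ d) = d - (n:ℝ) * (K/2) := by
    rw [hiso _ ⟨by positivity, hn1⟩ d ⟨hd, le_refl d⟩, abs_of_nonpos (by linarith)]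
    ring
  rcases spec_at hu hK hiso h0 n hn1 with ⟨u, hu1⟩ | ⟨a, b, hab, hm1⟩
  · -- vertex at grid, remainder point would be interior non-special
    have hball : dist (N.ι u) (γ d) ≤ K / 2 := by
      rw [← hu1, hdd]; linarith
    obtain ⟨v, h, hv⟩ := ball_vertex hu hK hball
    have hvd : γ d = N.param u v h (d - (n:ℝ) * (K/2)) := by
      rw [hv, ← hu1, hdd]
    rcases hEnd with ⟨w, hw⟩ | ⟨a', b', h', hw⟩
    · have heq : N.param u v h (d - (n:ℝ) * (K/2)) = N.ι w := by rw [← hvd, hw]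
      exact interior_ne_vertex hu hK h ⟨hρpos, by linarith⟩ w heq
    · have heq : N.param u v h (d - (n:ℝ) * (K/2)) = N.param a' b' h' (K/2) := by
        rw [← hvd, hw]
      have := midpoint_offset hu hK h h' ⟨hρpos.le, by linarith⟩ heq
      linarith
  · have hball : dist (N.param a b hab (K/2)) (γ d) ≤ K / 2 := by
      rw [← hm1, hdd]; linarith
    obtain ⟨t, ht, hvd, habs⟩ := ball_mid hu hK hab hball
    rw [← hm1, hdd] at habs
    rcases hEnd with ⟨w, hw⟩ | ⟨a', b', h', hw⟩
    · rcases vertex_on_edge hu hK hab ht (by rw [← hvd, hw]) with ⟨-, h2⟩ | ⟨-, h2⟩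
      · rw [h2] at habs
        rw [abs_of_nonpos (by linarith)] at habs
        linarith
      · rw [h2] at habs
        rw [abs_of_nonneg (by linarith)] at habs
        linarith
    · have heq : N.param a b hab t = N.param a' b' h' (K/2) := by rw [← hvd, hw]
      have := midpoint_offset hu hK hab h' ht heq
      rw [this] at habs
      simp at habs
      linarith

end MetricGraph

end Toolbox5
section Toolbox6

open MetricGraph

variable {M : MetricGraph} {LG : LineGraphOf M} {k : ℝ}

lemma line_uniform (hk : 0 < k) (hlen : M.Uniform k) : (LG.L).Uniform k := by
  intro e he
  induction e with
  | _ a b =>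
    have hadj : LG.L.G.Adj a b := (LG.L.G.mem_edgeSet).1 he
    rw [LG.len_eq a b hadj, hlen _ (LG.vEquiv a).2, hlen _ (LG.vEquiv b).2]
    ring

lemma orient {a b : LG.L.V} (hab : LG.L.G.Adj a b) :
    ∃ (U W : M.V) (hUW : M.G.Adj U W), (LG.vEquiv a : Sym2 M.V) = s(U, W) ∧
      W ∈ (LG.vEquiv b : Sym2 M.V) := by
  obtain ⟨hne, z, hza, hzb⟩ := (LG.adj_iff a b).1 hab
  obtain ⟨U, W, hrep⟩ : ∃ U W, (LG.vEquiv a : Sym2 M.V) = s(U, W) := by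
    induction (LG.vEquiv a : Sym2 M.V) with
    | _ x y => exact ⟨x, y, rfl⟩
  have hedge : s(U, W) ∈ M.G.edgeSet := by rw [← hrep]; exact (LG.vEquiv a).2
  have hUW : M.G.Adj U W := (M.G.mem_edgeSet).1 hedge
  rw [hrep] at hza
  rcases Sym2.mem_iff.1 hza with hzU | hzW
  · exact ⟨W, U, hUW.symm, hrep.trans Sym2.eq_swap, by rw [← hzU]; exact hzb⟩
  · exact ⟨U, W, hUW, hrep, by rw [← hzW]; exact hzb⟩

lemma adj_of_share (hk : 0 < k) (hlen : M.Uniform k) {e f : LG.L.V} (hne : e ≠ f)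
    {z : M.V} (hz1 : z ∈ (LG.vEquiv e : Sym2 M.V)) (hz2 : z ∈ (LG.vEquiv f : Sym2 M.V)) :
    LG.L.G.Adj e f := (LG.adj_iff e f).2 ⟨hne, z, hz1, hz2⟩

lemma lift_walk (hk : 0 < k) (hlen : M.Uniform k) :
    ∀ {u v : M.V} (W : M.G.Walk u v) (e f : LG.L.V),
      u ∈ (LG.vEquiv e : Sym2 M.V) → v ∈ (LG.vEquiv f : Sym2 M.V) →
      dist (LG.L.ι e) (LG.L.ι f) ≤ (W.edges.map M.ℓ).sum + k := by
  have hLu : (LG.L).Uniform k := line_uniform hk hlen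
  intro u v W
  induction W with
  | nil =>
    intro e f hue hvf
    simp only [SimpleGraph.Walk.edges_nil, List.map_nil, List.sum_nil, zero_add]
    by_cases hef : e = f
    · rw [hef, dist_self]; exact hk.le
    · exact dist_vertex_le_of_adj hLu hk (adj_of_share hk hlen hef hue hvf)
  | @cons u u₁ v h p ih =>
    intro e f hue hvf
    set g : LG.L.V := LG.vEquiv.symm ⟨s(u, u₁), (M.G.mem_edgeSet).2 h⟩ with hg
    have hgval : (LG.vEquiv g : Sym2 M.V) = s(u, u₁) := by
      rw [hg, Equiv.apply_symm_apply]
    have hu1g : u₁ ∈ (LG.vEquiv g : Sym2 M.V) := by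
      rw [hgval]; exact Sym2.mem_iff.2 (Or.inr rfl)
    have hug : u ∈ (LG.vEquiv g : Sym2 M.V) := by
      rw [hgval]; exact Sym2.mem_iff.2 (Or.inl rfl)
    have hIH := ih g f hu1g hvf
    have hstep : dist (LG.L.ι e) (LG.L.ι g) ≤ k := by
      by_cases hef : e = g
      · rw [hef, dist_self]; exact hk.le
      · exact dist_vertex_le_of_adj hLu hk (adj_of_share hk hlen hef hue hug)
    have htotal := dist_triangle (LG.L.ι e) (LG.L.ι g) (LG.L.ι f)
    have hsum : ((SimpleGraph.Walk.cons h p).edges.map M.ℓ).sum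
        = k + (p.edges.map M.ℓ).sum := by
      rw [SimpleGraph.Walk.edges_cons, List.map_cons, List.sum_cons, hlen _ ((M.G.mem_edgeSet).2 h)]
    rw [hsum]
    linarith

lemma dist_L_le_dist_G (hk : 0 < k) (hlen : M.Uniform k) {e f : LG.L.V} {u v : M.V}
    (hue : u ∈ (LG.vEquiv e : Sym2 M.V)) (hvf : v ∈ (LG.vEquiv f : Sym2 M.V)) :
    dist (LG.L.ι e) (LG.L.ι f) ≤ dist (M.ι u) (M.ι v) + k := by
  rw [M.dist_vertex u v]
  have hne : { L : ℝ | ∃ w : M.G.Walk u v, L = (w.edges.map M.ℓ).sum }.Nonempty := by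
    obtain ⟨w⟩ := M.conn u v
    exact ⟨_, w, rfl⟩
  have hlb : dist (LG.L.ι e) (LG.L.ι f) - k ≤
      sInf { L : ℝ | ∃ w : M.G.Walk u v, L = (w.edges.map M.ℓ).sum } := by
    apply le_csInf hne
    rintro L ⟨w, rfl⟩
    linarith [lift_walk hk hlen w e f hue hvf]
  linarith

lemma mid_dist_ge (hk : 0 < k) (hlen : M.Uniform k) {e f : LG.L.V}
    {U W U' W' : M.V} {hUW : M.G.Adj U W} {hUW' : M.G.Adj U' W'}
    (he : (LG.vEquiv e : Sym2 M.V) = s(U, W)) (hf : (LG.vEquiv f : Sym2 M.V) = s(U', W')) :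
    dist (LG.L.ι e) (LG.L.ι f) ≤ dist (M.param U W hUW (k/2)) (M.param U' W' hUW' (k/2)) := by
  by_cases hef : e = f
  · rw [hef, dist_self]
    exact dist_nonneg
  set D := dist (LG.L.ι e) (LG.L.ι f) with hD
  have hDk : ∀ z : M.V, z ∈ (LG.vEquiv e : Sym2 M.V) → z ∈ (LG.vEquiv f : Sym2 M.V) →
      D ≤ k := by
    intro z hz1 hz2
    have := dist_vertex_le_of_adj (line_uniform hk hlen) hk (adj_of_share hk hlen hef hz1 hz2)
    exact this
  have hvert : ∀ z : M.V, z ∈ (LG.vEquiv e : Sym2 M.V) →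
      D - k/2 ≤ dist (M.ι z) (M.param U' W' hUW' (k/2)) := by
    intro z hz
    rw [dist_comm, dist_eq' hlen hUW' (half_mem_Icc hk) (M.ι z)]
    refine le_csInf ⟨k/2 + dist (M.ι U') (M.ι z), Or.inl (Or.inl rfl)⟩ ?_
    rintro x ((rfl | rfl) | ⟨r, hr, hy, rfl⟩)
    · have h1 : D ≤ dist (M.ι z) (M.ι U') + k := by
        apply dist_L_le_dist_G hk hlen hz
        rw [hf]; exact Sym2.mem_iff.2 (Or.inl rfl)
      rw [dist_comm] at h1
      linarith
    · have h1 : D ≤ dist (M.ι z) (M.ι W') + k := by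
        apply dist_L_le_dist_G hk hlen hz
        rw [hf]; exact Sym2.mem_iff.2 (Or.inr rfl)
      rw [dist_comm] at h1
      linarith
    · rcases vertex_on_edge hlen hk hUW' hr hy with ⟨hz2, hr2⟩ | ⟨hz2, hr2⟩
      · have hzf : z ∈ (LG.vEquiv f : Sym2 M.V) := by
          rw [hf, hz2]; exact Sym2.mem_iff.2 (Or.inl rfl)
        have := hDk z hz hzf
        rw [hr2, sub_zero, abs_of_nonneg (by linarith)]
        linarith
      · have hzf : z ∈ (LG.vEquiv f : Sym2 M.V) := by
          rw [hf, hz2]; exact Sym2.mem_iff.2 (Or.inr rfl)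
        have := hDk z hz hzf
        rw [hr2, abs_of_nonpos (by linarith)]
        linarith
  rw [dist_eq' hlen hUW (half_mem_Icc hk) _]
  refine le_csInf ⟨k/2 + dist (M.ι U) (M.param U' W' hUW' (k/2)), Or.inl (Or.inl rfl)⟩ ?_
  rintro x ((rfl | rfl) | ⟨r, hr, hy, rfl⟩)
  · have h1 := hvert U (by rw [he]; exact Sym2.mem_iff.2 (Or.inl rfl))
    linarith
  · have h1 := hvert W (by rw [he]; exact Sym2.mem_iff.2 (Or.inr rfl))
    linarith
  · exfalso
    have hs : s(U', W') = s(U, W) :=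
      interior_disjoint hlen hk hUW' hUW ⟨by linarith, by linarith⟩ hr hy
    apply hef
    apply LG.vEquiv.injective
    apply Subtype.ext
    rw [he, hf, hs]

variable (hm : CanonicalMap M LG)

lemma h_vertex (hk : 0 < k) (hlen : M.Uniform k) {e b : LG.L.V} (hab : LG.L.G.Adj e b) :
    ∃ (U W : M.V) (hUW : M.G.Adj U W), (LG.vEquiv e : Sym2 M.V) = s(U, W) ∧
      hm.h (LG.L.ι e) = M.param U W hUW (k/2) := by
  obtain ⟨U, W, hUW, h1, h2⟩ := orient hab
  have hmem : (0:ℝ) ∈ Set.Icc (0:ℝ) (M.ℓ (LG.vEquiv e : Sym2 M.V) / 2) := by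
    rw [hlen _ (LG.vEquiv e).2]
    exact ⟨le_refl 0, by linarith⟩
  have := hm.h_halfEdge e b hab U W hUW h1 h2 0 hmem
  rw [LG.L.param_zero, hlen _ (LG.vEquiv e).2, add_zero] at this
  exact ⟨U, W, hUW, h1, this⟩

lemma seg_image (hk : 0 < k) (hlen : M.Uniform k) {γ : ℝ → LG.L.X} {d t0 : ℝ}
    (hiso : ∀ a ∈ Set.Icc (0:ℝ) d, ∀ b ∈ Set.Icc (0:ℝ) d, dist (γ a) (γ b) = |a - b|)
    (ht0 : 0 ≤ t0) (ht0d : t0 + k/2 ≤ d)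
    (hsp : VAt LG.L γ t0 ∨ MAt LG.L k γ t0) :
    ∃ (U W : M.V) (hUW : M.G.Adj U W) (c ε : ℝ),
      ((ε = 1 ∧ c = k/2) ∨ (ε = -1 ∧ c = k)) ∧
      ∀ s ∈ Set.Icc (0:ℝ) (k/2), hm.h (γ (t0 + s)) = M.param U W hUW (c + ε * s) := by
  have hLu : (LG.L).Uniform k := line_uniform hk hlen
  have hiso' := iso_shift hiso ht0 (by linarith)
  rcases hsp with ⟨E, hE⟩ | ⟨A, B, hAB, hE⟩
  · obtain ⟨v, h, hv⟩ := step_vertex hLu hk (γ := fun s => γ (t0 + s)) hiso'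
      (by simpa using hE) (by linarith)
    obtain ⟨U, W, hUW, h1, h2⟩ := orient h
    refine ⟨U, W, hUW, k/2, 1, Or.inl ⟨rfl, rfl⟩, ?_⟩
    intro s hs
    have hmem : s ∈ Set.Icc (0:ℝ) (M.ℓ (LG.vEquiv E : Sym2 M.V) / 2) := by
      rw [hlen _ (LG.vEquiv E).2]
      exact hs
    have hhe := hm.h_halfEdge E v h U W hUW h1 h2 s hmem
    rw [hlen _ (LG.vEquiv E).2] at hhe
    rw [hv s hs, hhe, one_mul]
  · obtain ⟨a', b', h', -, -, hv⟩ := step_mid hLu hk (γ := fun s => γ (t0 + s)) hiso'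
      (hab := hAB) (by simpa using hE) (by linarith)
    obtain ⟨U, W, hUW, h1, h2⟩ := orient h'.symm
    refine ⟨U, W, hUW, k, -1, Or.inr ⟨rfl, rfl⟩, ?_⟩
    intro s hs
    have hflip : LG.L.param a' b' h' (k/2 + s) = LG.L.param b' a' h'.symm (k/2 - s) := by
      rw [param_flip hLu h']
      congr 1
      ring
    have hmem : (k/2 - s) ∈ Set.Icc (0:ℝ) (M.ℓ (LG.vEquiv b' : Sym2 M.V) / 2) := by
      rw [hlen _ (LG.vEquiv b').2]
      exact ⟨by linarith [hs.2], by linarith [hs.1]⟩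
    have hhe := hm.h_halfEdge b' a' h'.symm U W hUW h1 h2 (k/2 - s) hmem
    rw [hlen _ (LG.vEquiv b').2] at hhe
    rw [hv s hs, hflip, hhe]
    congr 1
    ring

end Toolbox6
section Toolbox7

open MetricGraph

lemma trivial_arc {X : Type} [MetricSpace X] (z : X) : IsGeodesicArc z z {z} := by
  refine ⟨fun _ => z, rfl, rfl, ?_, ?_⟩
  · intro a ha b hb
    rw [dist_self] at ha hb
    have ha' : a = 0 := le_antisymm ha.2 ha.1
    have hb' : b = 0 := le_antisymm hb.2 hb.1
    rw [ha', hb', dist_self]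
    simp
  · rw [dist_self, Set.Icc_self, Set.image_singleton]

lemma arc_of_iso {X : Type} [MetricSpace X] {f : ℝ → X} {α β : ℝ} (hab : α ≤ β)
    (hd : ∀ a ∈ Set.Icc α β, ∀ b ∈ Set.Icc α β, dist (f a) (f b) = |a - b|) :
    IsGeodesicArc (f α) (f β) (f '' Set.Icc α β) ∧ dist (f α) (f β) = β - α := by
  have hαβ : dist (f α) (f β) = β - α := by
    rw [hd α ⟨le_refl α, hab⟩ β ⟨hab, le_refl β⟩, abs_of_nonpos (by linarith)]
    ring
  refine ⟨⟨fun r => f (α + r), by simp, ?_, ?_, ?_⟩, hαβ⟩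
  · rw [hαβ]
    congr 1
    ring_nf
  · intro a ha b hb
    rw [hαβ] at ha hb
    rw [hd (α + a) ⟨by linarith [ha.1], by linarith [ha.2]⟩
        (α + b) ⟨by linarith [hb.1], by linarith [hb.2]⟩]
    congr 1
    ring
  · rw [hαβ]
    ext z
    constructor
    · rintro ⟨r, hr, rfl⟩
      refine ⟨r - α, ⟨by linarith [hr.1], by linarith [hr.2]⟩, ?_⟩
      show f (α + (r - α)) = f r
      congr 1
      ring
    · rintro ⟨r, hr, rfl⟩
      exact ⟨α + r, ⟨by linarith [hr.1], by linarith [hr.2]⟩, rfl⟩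

namespace MetricGraph

lemma vertex_nbr {N : MetricGraph} {K : ℝ} (hu : Uniform N K) (hK : 0 < K)
    {γ : ℝ → N.X} {d t : ℝ}
    (hiso : ∀ a ∈ Set.Icc (0:ℝ) d, ∀ b ∈ Set.Icc (0:ℝ) d, dist (γ a) (γ b) = |a - b|)
    (ht0 : 0 ≤ t) (htd : t ≤ d) (hKd : K/2 ≤ d) (hgrid : t = 0 ∨ K/2 ≤ t)
    {E : N.V} (hE : γ t = N.ι E) : ∃ (F : N.V), N.G.Adj E F := by
  by_cases hfwd : t + K/2 ≤ d
  · obtain ⟨v, h, -⟩ := step_vertex hu hK (γ := fun s => γ (t + s))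
      (iso_shift hiso ht0 htd) (by simpa using hE) (by linarith)
    exact ⟨v, h⟩
  · rcases hgrid with rfl | hKt
    · exact absurd (by linarith) hfwd
    · have hiso' : ∀ a ∈ Set.Icc (0:ℝ) t, ∀ b ∈ Set.Icc (0:ℝ) t,
          dist (γ (t - a)) (γ (t - b)) = |a - b| := by
        intro a ha b hb
        rw [hiso (t - a) ⟨by linarith [ha.2], by linarith [ha.1]⟩
            (t - b) ⟨by linarith [hb.2], by linarith [hb.1]⟩, ← abs_neg]
        congr 1
        ring
      obtain ⟨v, h, -⟩ := step_vertex hu hK (γ := fun s => γ (t - s)) hiso'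
        (by simpa using hE) hKt
      exact ⟨v, h⟩

end MetricGraph

variable {M : MetricGraph} {LG : LineGraphOf M} (hm : CanonicalMap M LG) {k : ℝ}

lemma seg_exact (hk : 0 < k) (hlen : M.Uniform k) {γ : ℝ → LG.L.X} {d t0 : ℝ}
    (hiso : ∀ a ∈ Set.Icc (0:ℝ) d, ∀ b ∈ Set.Icc (0:ℝ) d, dist (γ a) (γ b) = |a - b|)
    (ht0 : 0 ≤ t0) (ht0d : t0 + k/2 ≤ d)
    (hsp : VAt LG.L γ t0 ∨ MAt LG.L k γ t0) :
    ∀ a ∈ Set.Icc t0 (t0 + k/2), ∀ b ∈ Set.Icc t0 (t0 + k/2),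
      dist (hm.h (γ a)) (hm.h (γ b)) = |a - b| := by
  obtain ⟨U, W, hUW, c, ε, hcase, himg⟩ := seg_image hm hk hlen hiso ht0 ht0d hsp
  intro a ha b hb
  have h1 := himg (a - t0) ⟨by linarith [ha.1], by linarith [ha.2]⟩
  have h2 := himg (b - t0) ⟨by linarith [hb.1], by linarith [hb.2]⟩
  rw [show t0 + (a - t0) = a by ring] at h1
  rw [show t0 + (b - t0) = b by ring] at h2
  rcases hcase with ⟨hε, hc⟩ | ⟨hε, hc⟩
  · rw [hε, hc] at h1 h2
    rw [h1, h2, dist_within_edge hlen hk hUW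
      ⟨by linarith [ha.1], by linarith [ha.2]⟩ ⟨by linarith [hb.1], by linarith [hb.2]⟩]
    congr 1
    ring
  · rw [hε, hc] at h1 h2
    rw [h1, h2, dist_within_edge hlen hk hUW
      ⟨by linarith [ha.2], by linarith [ha.1]⟩ ⟨by linarith [hb.2], by linarith [hb.1]⟩,
      show (k + -1 * (a - t0)) - (k + -1 * (b - t0)) = -(a - b) by ring, abs_neg]

lemma lip (hk : 0 < k) (hlen : M.Uniform k) {γ : ℝ → LG.L.X} {d : ℝ}
    (hiso : ∀ a ∈ Set.Icc (0:ℝ) d, ∀ b ∈ Set.Icc (0:ℝ) d, dist (γ a) (γ b) = |a - b|)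
    (h0 : VAt LG.L γ 0 ∨ MAt LG.L k γ 0) {n : ℕ} (hdn : d = (n:ℝ) * (k/2)) :
    ∀ a ∈ Set.Icc (0:ℝ) d, ∀ b ∈ Set.Icc (0:ℝ) d, a ≤ b →
      dist (hm.h (γ a)) (hm.h (γ b)) ≤ b - a := by
  have hLu : (LG.L).Uniform k := line_uniform hk hlen
  have hk2 : (0:ℝ) < k/2 := by linarith
  -- single segment estimate
  have single : ∀ a ∈ Set.Icc (0:ℝ) d, ∀ b ∈ Set.Icc (0:ℝ) d, a ≤ b →
      b ≤ ((⌊a / (k/2)⌋₊ : ℝ) + 1) * (k/2) →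
      dist (hm.h (γ a)) (hm.h (γ b)) ≤ b - a := by
    intro a ha b hb hab hbound
    rcases eq_or_lt_of_le hab with rfl | hlt
    · rw [dist_self]
      linarith
    · set j := ⌊a / (k/2)⌋₊ with hj
      have hj1 : (j:ℝ) * (k/2) ≤ a := by
        have := Nat.floor_le (div_nonneg ha.1 hk2.le)
        calc (j:ℝ) * (k/2) ≤ (a / (k/2)) * (k/2) :=
              mul_le_mul_of_nonneg_right this hk2.le
        _ = a := by field_simp
      have hjn : j < n := by
        rw [hj]
        apply (Nat.floor_lt (div_nonneg ha.1 hk2.le)).2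
        rw [div_lt_iff₀ hk2]
        calc a < b := hlt
        _ ≤ d := hb.2
        _ = (n:ℝ) * (k/2) := hdn
      have hjd : (j:ℝ) * (k/2) + k/2 ≤ d := by
        rw [hdn]
        have : (j:ℝ) + 1 ≤ (n:ℝ) := by exact_mod_cast hjn
        nlinarith
      have hsp := spec_at hLu hk hiso h0 j (by linarith)
      have hse := seg_exact hm hk hlen hiso (mul_nonneg (Nat.cast_nonneg j) hk2.le) hjd hsp
      rw [hse a ⟨hj1, by linarith⟩ b ⟨by linarith, by linarith⟩,
        abs_of_nonpos (by linarith)]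
      linarith
  -- induction over segments
  have main : ∀ m : ℕ, ∀ a ∈ Set.Icc (0:ℝ) d, ∀ b ∈ Set.Icc (0:ℝ) d, a ≤ b →
      b ≤ ((⌊a / (k/2)⌋₊ : ℝ) + 1 + m) * (k/2) →
      dist (hm.h (γ a)) (hm.h (γ b)) ≤ b - a := by
    intro m
    induction m with
    | zero =>
      intro a ha b hb hab hbound
      apply single a ha b hb hab
      push_cast at hbound ⊢
      linarith
    | succ m ih =>
      intro a ha b hb hab hbound
      by_cases hb1 : b ≤ ((⌊a / (k/2)⌋₊ : ℝ) + 1) * (k/2)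
      · exact single a ha b hb hab hb1
      · push_neg at hb1
        set c := ((⌊a / (k/2)⌋₊ : ℝ) + 1) * (k/2) with hc
        have hac : a ≤ c := by
          have h3 := Nat.lt_floor_add_one (a / (k/2))
          have h4 := (div_lt_iff₀ hk2).1 h3
          rw [hc]
          linarith
        have hcd : c ∈ Set.Icc (0:ℝ) d := ⟨mul_nonneg (by positivity) hk2.le, by linarith [hb.2]⟩
        have h1 : dist (hm.h (γ a)) (hm.h (γ c)) ≤ c - a :=
          single a ha c hcd hac (le_refl _)
        have hfc : (⌊c / (k/2)⌋₊ : ℝ) = (⌊a / (k/2)⌋₊ : ℝ) + 1 := by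
          have hval : c / (k/2) = ((⌊a / (k/2)⌋₊ + 1 : ℕ) : ℝ) := by
            rw [hc]
            push_cast
            field_simp
          rw [hval, Nat.floor_natCast]
          push_cast
          ring
        have h2 : dist (hm.h (γ c)) (hm.h (γ b)) ≤ b - c := by
          apply ih c hcd b hb (by linarith)
          rw [hfc]
          push_cast at hbound ⊢
          linarith
        calc dist (hm.h (γ a)) (hm.h (γ b)) ≤
            dist (hm.h (γ a)) (hm.h (γ c)) + dist (hm.h (γ c)) (hm.h (γ b)) :=
              dist_triangle _ _ _
        _ ≤ (c - a) + (b - c) := add_le_add h1 h2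
        _ = b - a := by ring
  intro a ha b hb hab
  apply main n a ha b hb hab
  calc b ≤ d := hb.2
  _ = (n:ℝ) * (k/2) := hdn
  _ ≤ ((⌊a / (k/2)⌋₊ : ℝ) + 1 + n) * (k/2) := by
      apply mul_le_mul_of_nonneg_right _ hk2.le
      have : (0:ℝ) ≤ (⌊a / (k/2)⌋₊ : ℝ) := by positivity
      linarith

end Toolbox7
section Toolbox8

open MetricGraph

variable {M : MetricGraph} {LG : LineGraphOf M} (hm : CanonicalMap M LG) {k : ℝ}

lemma middle (hk : 0 < k) (hlen : M.Uniform k) {γ : ℝ → LG.L.X} {d : ℝ}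
    (hiso : ∀ a ∈ Set.Icc (0:ℝ) d, ∀ b ∈ Set.Icc (0:ℝ) d, dist (γ a) (γ b) = |a - b|)
    (h0 : VAt LG.L γ 0 ∨ MAt LG.L k γ 0) {n : ℕ} (hdn : d = (n:ℝ) * (k/2))
    (hkd : k/2 ≤ d) {s₀ t₀ : ℝ} (hs₀g : s₀ = 0 ∨ s₀ = k/2) (ht₀d : t₀ ≤ d)
    {J : ℕ} (hJ : t₀ = s₀ + (J:ℝ) * k)
    (hVt : ∀ m : ℕ, m ≤ J → VAt LG.L γ (s₀ + (m:ℝ) * k)) :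
    ∀ a ∈ Set.Icc s₀ t₀, ∀ b ∈ Set.Icc s₀ t₀, a ≤ b →
      dist (hm.h (γ a)) (hm.h (γ b)) = b - a := by
  have hLu : (LG.L).Uniform k := line_uniform hk hlen
  have hk2 : (0:ℝ) < k/2 := by linarith
  have hs₀0 : 0 ≤ s₀ := by rcases hs₀g with rfl | rfl <;> linarith
  have hs₀k : s₀ ≤ k/2 := by rcases hs₀g with rfl | rfl <;> linarith
  have hst : s₀ ≤ t₀ := by
    rw [hJ]
    have : (0:ℝ) ≤ (J:ℝ) * k := by positivity
    linarith
  have hIcc : ∀ r ∈ Set.Icc s₀ t₀, r ∈ Set.Icc (0:ℝ) d :=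
    fun r hr => ⟨le_trans hs₀0 hr.1, le_trans hr.2 ht₀d⟩
  intro a ha b hb hab
  apply le_antisymm
  · have := lip hm hk hlen hiso h0 hdn a (hIcc a ha) b (hIcc b hb) hab
    linarith
  · -- lower bound via V-grid points
    set ma := ⌊(a - s₀) / k⌋₊ with hma
    set mbf := ⌊(b - s₀) / k⌋₊ with hmbf
    set mb := min J (mbf + 1) with hmb
    set u := s₀ + (ma:ℝ) * k with hu
    set w := s₀ + (mb:ℝ) * k with hw
    have hma_le : (ma:ℝ) * k ≤ a - s₀ := by
      have h1 := Nat.floor_le (div_nonneg (sub_nonneg.2 ha.1) hk.le)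
      calc (ma:ℝ) * k ≤ ((a - s₀)/k) * k := mul_le_mul_of_nonneg_right h1 hk.le
      _ = a - s₀ := by field_simp
    have hmbf_le : (mbf:ℝ) * k ≤ b - s₀ := by
      have h1 := Nat.floor_le (div_nonneg (sub_nonneg.2 hb.1) hk.le)
      calc (mbf:ℝ) * k ≤ ((b - s₀)/k) * k := mul_le_mul_of_nonneg_right h1 hk.le
      _ = b - s₀ := by field_simp
    have hb_lt : b - s₀ < ((mbf:ℝ) + 1) * k := by
      have h1 := Nat.lt_floor_add_one ((b - s₀) / k)
      have h2 := (div_lt_iff₀ hk).1 h1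
      push_cast
      linarith
    have hmaJ : ma ≤ J := by
      by_contra hcon
      push_neg at hcon
      have : (J:ℝ) + 1 ≤ (ma:ℝ) := by exact_mod_cast hcon
      have : ((J:ℝ) + 1) * k ≤ (ma:ℝ) * k := mul_le_mul_of_nonneg_right this hk.le
      have hat : a ≤ t₀ := ha.2
      rw [hJ] at hat
      linarith
    have hmbJ : mb ≤ J := min_le_left _ _
    have hua : u ≤ a := by rw [hu]; linarith
    have hbw : b ≤ w := by
      rw [hw, hmb]
      rcases le_total J (mbf + 1) with hmin | hmin
      · rw [min_eq_left hmin]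
        have hbt : b ≤ t₀ := hb.2
        rw [hJ] at hbt
        linarith
      · rw [min_eq_right hmin]
        push_cast
        linarith
    have huw : u ≤ w := by linarith
    have hu0d : u ∈ Set.Icc (0:ℝ) d := by
      constructor
      · rw [hu]; positivity
      · rw [hu]
        have : (ma:ℝ) ≤ (J:ℝ) := by exact_mod_cast hmaJ
        have : (ma:ℝ) * k ≤ (J:ℝ) * k := mul_le_mul_of_nonneg_right this hk.le
        rw [hJ] at ht₀d
        linarith
    have hw0d : w ∈ Set.Icc (0:ℝ) d := by
      constructor
      · rw [hw]; positivity
      · rw [hw]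
        have : (mb:ℝ) ≤ (J:ℝ) := by exact_mod_cast hmbJ
        have : (mb:ℝ) * k ≤ (J:ℝ) * k := mul_le_mul_of_nonneg_right this hk.le
        rw [hJ] at ht₀d
        linarith
    obtain ⟨E, hE⟩ := hVt ma hmaJ
    obtain ⟨F, hF⟩ := hVt mb hmbJ
    have hgridu : u = 0 ∨ k/2 ≤ u := by
      rcases hs₀g with h | h
      · rcases Nat.eq_zero_or_pos ma with h2 | h2
        · left; rw [hu, h, h2]; simp
        · right
          have : (1:ℝ) ≤ (ma:ℝ) := by exact_mod_cast h2
          rw [hu, h]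
          nlinarith
      · right
        rw [hu, h]
        have : (0:ℝ) ≤ (ma:ℝ) * k := by positivity
        linarith
    have hgridw : w = 0 ∨ k/2 ≤ w := by
      rcases hs₀g with h | h
      · rcases Nat.eq_zero_or_pos mb with h2 | h2
        · left; rw [hw, h, h2]; simp
        · right
          have : (1:ℝ) ≤ (mb:ℝ) := by exact_mod_cast h2
          rw [hw, h]
          nlinarith
      · right
        rw [hw, h]
        have : (0:ℝ) ≤ (mb:ℝ) * k := by positivity
        linarith
    obtain ⟨E1, hadjE⟩ := vertex_nbr hLu hk hiso hu0d.1 hu0d.2 hkd hgridu hE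
    obtain ⟨F1, hadjF⟩ := vertex_nbr hLu hk hiso hw0d.1 hw0d.2 hkd hgridw hF
    obtain ⟨U1, W1, hUW1, hEeq, hhu⟩ := h_vertex hm hk hlen hadjE
    obtain ⟨U2, W2, hUW2, hFeq, hhw⟩ := h_vertex hm hk hlen hadjF
    have hLuvw : dist (LG.L.ι E) (LG.L.ι F) = w - u := by
      rw [← hE, ← hF, hiso u hu0d w hw0d, abs_of_nonpos (by linarith)]
      ring
    have hmain : w - u ≤ dist (hm.h (γ u)) (hm.h (γ w)) := by
      rw [hE, hF, hhu, hhw]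
      rw [← hLuvw]
      exact mid_dist_ge hk hlen hEeq hFeq
    have hside1 : dist (hm.h (γ u)) (hm.h (γ a)) ≤ a - u :=
      lip hm hk hlen hiso h0 hdn u hu0d a (hIcc a ha) hua
    have hside2 : dist (hm.h (γ b)) (hm.h (γ w)) ≤ w - b :=
      lip hm hk hlen hiso h0 hdn b (hIcc b hb) w hw0d hbw
    have htri : dist (hm.h (γ u)) (hm.h (γ w)) ≤
        dist (hm.h (γ u)) (hm.h (γ a)) + dist (hm.h (γ a)) (hm.h (γ b)) +
          dist (hm.h (γ b)) (hm.h (γ w)) := dist_triangle4 _ _ _ _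
    linarith

end Toolbox8
section Final

open MetricGraph

/-- Let `G` be a graph with every edge of length `k`.  If `γ*` is a
geodesic of `L(G)` joining `x` and `y` with `x, y ∈ PM_LV(L(G))`, then `h(γ*)` is the
union of three geodesics `γ₁, γ₂, γ₃` of `G` with `h(x) ∈ γ₁`, `h(y) ∈ γ₃` and
`0 ≤ L(γ₁), L(γ₃) ≤ k/2`. -/
theorem canonicalMap_image_of_geodesic_uniform (M : MetricGraph) (LG : LineGraphOf M)
    (hm : CanonicalMap M LG) (k : ℝ) (hk : 0 < k)
    (hlen : ∀ e ∈ M.G.edgeSet, M.ℓ e = k)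
    (x y : LG.L.X) (hx : x ∈ lineGraphPMLV M LG) (hy : y ∈ lineGraphPMLV M LG)
    (γstar : Set LG.L.X) (hgeo : IsGeodesicArc x y γstar) :
    ∃ (p q : M.X) (γ₁ γ₂ γ₃ : Set M.X),
      hm.h '' γstar = γ₁ ∪ γ₂ ∪ γ₃ ∧
      IsGeodesicArc (hm.h x) p γ₁ ∧ IsGeodesicArc p q γ₂ ∧
      IsGeodesicArc q (hm.h y) γ₃ ∧
      dist (hm.h x) p ≤ k / 2 ∧ dist q (hm.h y) ≤ k / 2 := by
  obtain ⟨γ, hγ0, hγd, hiso, hset⟩ := hgeo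
  set d := dist x y with hd
  have hd0 : (0:ℝ) ≤ d := dist_nonneg
  have hLu : (LG.L).Uniform k := line_uniform hk hlen
  have hk2 : (0:ℝ) < k/2 := by linarith
  rcases eq_or_lt_of_le hd0 with hd00 | hdpos
  · -- degenerate case : x = y
    have hxy : γstar = {x} := by
      rw [hset, ← hd00, Set.Icc_self, Set.image_singleton, hγ0]
    have hyx : y = x := by rw [← hγd, ← hd00, hγ0]
    refine ⟨hm.h x, hm.h x, {hm.h x}, {hm.h x}, {hm.h x}, ?_, trivial_arc _,
      trivial_arc _, ?_, ?_, ?_⟩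
    · rw [hxy, Set.image_singleton]
      simp
    · rw [hyx]
      exact trivial_arc _
    · rw [dist_self]
      linarith
    · rw [hyx, dist_self]
      linarith
  · -- main case
    have h0 : VAt LG.L γ 0 ∨ MAt LG.L k γ 0 := by
      rcases hx with ⟨e, he⟩ | ⟨a, b, hab, hxe⟩
      · exact Or.inl ⟨e, by rw [hγ0]; exact he.symm⟩
      · refine Or.inr ⟨a, b, hab, ?_⟩
        rw [hγ0, hxe, hlen _ (LG.vEquiv a).2]
    have hEnd : VAt LG.L γ d ∨ MAt LG.L k γ d := by
      rcases hy with ⟨e, he⟩ | ⟨a, b, hab, hye⟩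
      · exact Or.inl ⟨e, by rw [hγd]; exact he.symm⟩
      · refine Or.inr ⟨a, b, hab, ?_⟩
        rw [hγd, hye, hlen _ (LG.vEquiv a).2]
    obtain ⟨n, hdn⟩ := total_length hLu hk hd0 hiso h0 hEnd
    have hn1 : 1 ≤ n := by
      rcases Nat.eq_zero_or_pos n with h | h
      · rw [h] at hdn
        simp at hdn
        exact absurd hdn (ne_of_gt hdpos)
      · exact h
    have hkd : k/2 ≤ d := by
      rw [hdn]
      have h1 : (1:ℝ) ≤ (n:ℝ) := by exact_mod_cast hn1
      nlinarith
    -- starting offset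
    obtain ⟨j₀, hj₀01, hs₀VT⟩ : ∃ j₀ : ℕ, (j₀ = 0 ∨ j₀ = 1) ∧
        (∀ m : ℕ, (j₀:ℝ)*(k/2) + (m:ℝ)*k ≤ d →
          VAt LG.L γ ((j₀:ℝ)*(k/2) + (m:ℝ)*k)) := by
      rcases h0 with hV | hM
      · refine ⟨0, Or.inl rfl, ?_⟩
        intro m hmd
        have hj : ((2*m : ℕ):ℝ) * (k/2) ≤ d := by
          push_cast
          push_cast at hmd
          linarith
        have hpar := (par hLu hk hiso (2*m) hj).1 (Or.inl ⟨hV, even_two_mul m⟩)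
        have hcast : ((2*m : ℕ):ℝ) * (k/2) = ((0:ℕ):ℝ)*(k/2) + (m:ℝ)*k := by
          push_cast
          ring
        rwa [hcast] at hpar
      · refine ⟨1, Or.inr rfl, ?_⟩
        intro m hmd
        have hj : ((2*m+1 : ℕ):ℝ) * (k/2) ≤ d := by
          push_cast
          push_cast at hmd
          linarith
        have hodd : ¬ Even (2*m+1) := by
          rw [Nat.even_add_one, not_not]
          exact even_two_mul m
        have hpar := (par hLu hk hiso (2*m+1) hj).1 (Or.inr ⟨hM, hodd⟩)
        have hcast : ((2*m+1 : ℕ):ℝ) * (k/2) = ((1:ℕ):ℝ)*(k/2) + (m:ℝ)*k := by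
          push_cast
          ring
        rwa [hcast] at hpar
    set s₀ : ℝ := (j₀:ℝ)*(k/2) with hs₀def
    have hs₀g : s₀ = 0 ∨ s₀ = k/2 := by
      rcases hj₀01 with h | h <;> rw [hs₀def, h] <;> [left; right] <;> norm_num
    have hs₀0 : 0 ≤ s₀ := by rcases hs₀g with h | h <;> rw [h] <;> linarith
    have hs₀k : s₀ ≤ k/2 := by rcases hs₀g with h | h <;> rw [h] <;> linarith
    have hs₀d : s₀ ≤ d := le_trans hs₀k hkd
    -- last V-grid point
    set J : ℕ := ⌊(d - s₀)/k⌋₊ with hJdef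
    set t₀ : ℝ := s₀ + (J:ℝ)*k with ht₀def
    have hJ_le : (J:ℝ)*k ≤ d - s₀ := by
      have h1 := Nat.floor_le (div_nonneg (by linarith : (0:ℝ) ≤ d - s₀) hk.le)
      calc (J:ℝ)*k ≤ ((d - s₀)/k)*k := mul_le_mul_of_nonneg_right h1 hk.le
      _ = d - s₀ := by field_simp
    have hJ_lt : d - s₀ < ((J:ℝ)+1)*k := by
      have h1 := Nat.lt_floor_add_one ((d - s₀)/k)
      have h2 := (div_lt_iff₀ hk).1 h1
      push_cast
      linarith
    have ht₀d : t₀ ≤ d := by rw [ht₀def]; linarith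
    have hst : s₀ ≤ t₀ := by
      rw [ht₀def]
      have : (0:ℝ) ≤ (J:ℝ)*k := by positivity
      linarith
    have ht₀0 : (0:ℝ) ≤ t₀ := le_trans hs₀0 hst
    -- remainder is 0 or k/2
    have hdt : d - t₀ = 0 ∨ d - t₀ = k/2 := by
      set m' : ℤ := (n:ℤ) - (j₀:ℤ) - 2*(J:ℤ) with hm'def
      have hm'eq : ((m':ℤ):ℝ)*(k/2) = d - t₀ := by
        rw [hm'def, ht₀def, hs₀def, hdn]
        push_cast
        ring
      have hm'0 : 0 ≤ m' := by
        by_contra hcon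
        push_neg at hcon
        have h1 : m' ≤ -1 := by omega
        have h2 : ((m':ℤ):ℝ) ≤ -1 := by exact_mod_cast h1
        nlinarith [hm'eq, ht₀d]
      have hm'2 : m' < 2 := by
        by_contra hcon
        push_neg at hcon
        have h2 : (2:ℝ) ≤ ((m':ℤ):ℝ) := by exact_mod_cast hcon
        have h3 : d - t₀ < k := by rw [ht₀def]; linarith
        nlinarith [hm'eq]
      have : m' = 0 ∨ m' = 1 := by omega
      rcases this with h | h <;> rw [h] at hm'eq
      · left
        rw [← hm'eq]
        norm_num
      · right
        rw [← hm'eq]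
        norm_num
    have hdtk : d - t₀ ≤ k/2 := by rcases hdt with h | h <;> rw [h] <;> linarith
    -- V-type at all grid points
    have hVt : ∀ m : ℕ, m ≤ J → VAt LG.L γ (s₀ + (m:ℝ)*k) := by
      intro m hmJ
      apply hs₀VT m
      have h1 : (m:ℝ) ≤ (J:ℝ) := by exact_mod_cast hmJ
      have h2 : (m:ℝ)*k ≤ (J:ℝ)*k := mul_le_mul_of_nonneg_right h1 hk.le
      linarith
    -- the three pieces of the image
    have hmid := middle hm hk hlen hiso h0 hdn hkd hs₀g ht₀d ht₀def hVt
    have hmid2 : ∀ a ∈ Set.Icc s₀ t₀, ∀ b ∈ Set.Icc s₀ t₀,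
        dist (hm.h (γ a)) (hm.h (γ b)) = |a - b| := by
      intro a ha b hb
      rcases le_total a b with h | h
      · rw [hmid a ha b hb h, abs_of_nonpos (by linarith)]
        ring
      · rw [dist_comm, hmid b hb a ha h, abs_of_nonneg (by linarith)]
    have hseg0 : ∀ a ∈ Set.Icc (0:ℝ) s₀, ∀ b ∈ Set.Icc (0:ℝ) s₀,
        dist (hm.h (γ a)) (hm.h (γ b)) = |a - b| := by
      intro a ha b hb
      have hse := seg_exact hm hk hlen hiso (le_refl 0) (by linarith) h0
      have := hse a ⟨by linarith [ha.1], by linarith [ha.2]⟩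
        b ⟨by linarith [hb.1], by linarith [hb.2]⟩
      exact this
    have hseg3 : ∀ a ∈ Set.Icc t₀ d, ∀ b ∈ Set.Icc t₀ d,
        dist (hm.h (γ a)) (hm.h (γ b)) = |a - b| := by
      rcases hdt with hcase | hcase
      · intro a ha b hb
        have ha' : a = t₀ := le_antisymm (by linarith [ha.2]) ha.1
        have hb' : b = t₀ := le_antisymm (by linarith [hb.2]) hb.1
        rw [ha', hb', dist_self, sub_self, abs_zero]
      · have hVt₀ : VAt LG.L γ t₀ := by
          have := hVt J (le_refl J)
          rwa [← ht₀def] at this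
        intro a ha b hb
        have hse := seg_exact hm hk hlen hiso ht₀0 (by linarith) (Or.inl hVt₀)
        exact hse a ⟨ha.1, by linarith [ha.2]⟩ b ⟨hb.1, by linarith [hb.2]⟩
    -- assemble the arcs
    obtain ⟨harc1, hd1⟩ := arc_of_iso (f := fun r => hm.h (γ r)) hs₀0 hseg0
    obtain ⟨harc2, hd2⟩ := arc_of_iso (f := fun r => hm.h (γ r)) hst hmid2
    obtain ⟨harc3, hd3⟩ := arc_of_iso (f := fun r => hm.h (γ r)) ht₀d hseg3
    have hfx : hm.h (γ 0) = hm.h x := by rw [hγ0]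
    have hfy : hm.h (γ d) = hm.h y := by rw [hγd]
    rw [hfx] at harc1 hd1
    rw [hfy] at harc3 hd3
    refine ⟨hm.h (γ s₀), hm.h (γ t₀), (fun r => hm.h (γ r)) '' Set.Icc 0 s₀,
      (fun r => hm.h (γ r)) '' Set.Icc s₀ t₀, (fun r => hm.h (γ r)) '' Set.Icc t₀ d,
      ?_, harc1, harc2, harc3, ?_, ?_⟩
    · rw [hset, Set.image_image]
      have hsplit : Set.Icc (0:ℝ) s₀ ∪ Set.Icc s₀ t₀ ∪ Set.Icc t₀ d
          = Set.Icc (0:ℝ) d := by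
        rw [Set.Icc_union_Icc_eq_Icc hs₀0 hst, Set.Icc_union_Icc_eq_Icc ht₀0 ht₀d]
      rw [← hsplit, Set.image_union, Set.image_union]
    · rw [hd1]
      linarith
    · rw [hd3]
      linarith

end Final
end

section
/- Let G be a graph (simple, connected, locally finite, with edges of arbitrary lengths) and let x, y, u, v ∈ G. Set Γ := [xu] ∪ [uv] ∪ [vy], a union of three geodesics. If L([xu]) ≤ l_max and L([vy]) ≤ l_max, where l_max := sup_{e ∈ E(G)} L(e), then for every α ∈ Γ there exists β on a geodesic [xy] with d_G(α, β) ≤ 2 δ(G) + l_max. -/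
open Metric
open scoped ENNReal

/-!
A point of `[uv]` is `2δ`-close to the other three sides of the geodesic quadrilateral
`x u v y`: cutting it along a diagonal `[vx]` gives two `δ`-thin triangles. Points of `[xu]`
and `[vy]` are within `l_max` of `x` and `y` respectively, and so is the point found on `[xu]`
or `[vy]` when the quadrilateral argument does not land on `[xy]` directly.
-/

section GeodesicArc

variable {X : Type} [MetricSpace X] {x y p : X} {s : Set X}

lemma IsGeodesicArc.mem_left (h : IsGeodesicArc x y s) : x ∈ s := by
  obtain ⟨γ, h0, -, -, rfl⟩ := h
  exact ⟨0, ⟨le_rfl, dist_nonneg⟩, h0⟩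

lemma IsGeodesicArc.symm (h : IsGeodesicArc x y s) : IsGeodesicArc y x s := by
  obtain ⟨γ, h0, hd, hiso, rfl⟩ := h
  have hflip : ∀ t ∈ Set.Icc (0 : ℝ) (dist x y), dist x y - t ∈ Set.Icc (0 : ℝ) (dist x y) :=
    fun t ht => ⟨by linarith [ht.2], by linarith [ht.1]⟩
  refine ⟨fun t => γ (dist x y - t), by simp [hd], by simp [dist_comm y x, h0], ?_, ?_⟩
  · intro a ha b hb
    rw [dist_comm y x] at ha hb
    rw [hiso _ (hflip a ha) _ (hflip b hb), ← abs_neg]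
    ring_nf
  · rw [dist_comm y x]
    ext q
    constructor
    · rintro ⟨t, ht, rfl⟩
      exact ⟨dist x y - t, hflip t ht, by simp⟩
    · rintro ⟨t, ht, rfl⟩
      exact ⟨dist x y - t, hflip t ht, rfl⟩

lemma IsGeodesicArc.mem_right (h : IsGeodesicArc x y s) : y ∈ s :=
  h.symm.mem_left

lemma IsGeodesicArc.isCompact (h : IsGeodesicArc x y s) : IsCompact s := by
  obtain ⟨γ, -, -, hiso, rfl⟩ := h
  refine isCompact_Icc.image_of_continuousOn (LipschitzOnWith.continuousOn (K := 1) ?_)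
  rw [lipschitzOnWith_iff_dist_le_mul]
  intro a ha b hb
  rw [hiso a ha b hb, Real.dist_eq, NNReal.coe_one, one_mul]

lemma IsGeodesicArc.dist_left_le (h : IsGeodesicArc x y s) (hp : p ∈ s) :
    dist x p ≤ dist x y := by
  obtain ⟨γ, h0, -, hiso, rfl⟩ := h
  obtain ⟨t, ht, rfl⟩ := hp
  have hdist := hiso 0 ⟨le_rfl, dist_nonneg⟩ t ht
  rw [h0, zero_sub, abs_neg, abs_of_nonneg ht.1] at hdist
  rw [hdist]
  exact ht.2

lemma IsGeodesicArc.edist_left_le (h : IsGeodesicArc x y s) (hp : p ∈ s) :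
    edist p x ≤ ENNReal.ofReal (dist x y) := by
  rw [edist_dist, dist_comm]
  exact ENNReal.ofReal_le_ofReal (h.dist_left_le hp)

lemma IsGeodesicArc.edist_right_le (h : IsGeodesicArc x y s) (hp : p ∈ s) :
    edist p y ≤ ENNReal.ofReal (dist x y) :=
  dist_comm y x ▸ h.symm.edist_left_le hp

end GeodesicArc

section Thin

variable {X : Type} [MetricSpace X]

lemma triThin_le_hypConst {x y z : X} {s₁ s₂ s₃ : Set X}
    (ht : IsGeodTriangle x y z s₁ s₂ s₃) : triThin s₁ s₂ s₃ ≤ hypConst X :=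
  le_iSup_of_le x <| le_iSup_of_le y <| le_iSup_of_le z <| le_iSup_of_le s₁ <|
    le_iSup_of_le s₂ <| le_iSup_of_le s₃ <|
      le_iSup (fun _ : IsGeodTriangle x y z s₁ s₂ s₃ => triThin s₁ s₂ s₃) ht

lemma IsGeodTriangle.exists_edist_le_hypConst {x y z p : X} {s₁ s₂ s₃ : Set X}
    (ht : IsGeodTriangle x y z s₁ s₂ s₃) (hp : p ∈ s₁) :
    ∃ q ∈ s₂ ∪ s₃, edist p q ≤ hypConst X := by
  obtain ⟨q, hq, hpq⟩ := (ht.2.1.isCompact.union ht.2.2.isCompact).exists_infDist_eq_dist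
    ⟨y, Or.inl ht.2.1.mem_left⟩ p
  refine ⟨q, hq, ?_⟩
  calc edist p q = ENNReal.ofReal (infDist p (s₂ ∪ s₃)) := by rw [edist_dist, hpq]
    _ ≤ sideThin s₁ (s₂ ∪ s₃) :=
      le_iSup₂ (f := fun q (_ : q ∈ s₁) => ENNReal.ofReal (infDist q (s₂ ∪ s₃))) p hp
    _ ≤ triThin s₁ s₂ s₃ := le_max_left _ _
    _ ≤ hypConst X := triThin_le_hypConst ht

lemma exists_edist_le_two_hypConst_of_mem_quadrilateral
    (hgeod : ∀ a b : X, ∃ s : Set X, IsGeodesicArc a b s) {x y u v α : X}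
    {sxu suv svy sxy : Set X} (h1 : IsGeodesicArc x u sxu) (h2 : IsGeodesicArc u v suv)
    (h3 : IsGeodesicArc v y svy) (h4 : IsGeodesicArc x y sxy) (hα : α ∈ suv) :
    ∃ β ∈ sxu ∪ svy ∪ sxy, edist α β ≤ 2 * hypConst X := by
  obtain ⟨svx, hvx⟩ := hgeod v x
  obtain ⟨p, hp | hp, hαp⟩ := IsGeodTriangle.exists_edist_le_hypConst ⟨h2, hvx, h1⟩ hα
  · obtain ⟨q, hq, hpq⟩ :=
      IsGeodTriangle.exists_edist_le_hypConst ⟨hvx.symm, h3, h4.symm⟩ hp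
    refine ⟨q, hq.elim (fun h => Or.inl (Or.inr h)) Or.inr, ?_⟩
    calc edist α q ≤ edist α p + edist p q := edist_triangle _ _ _
      _ ≤ hypConst X + hypConst X := add_le_add hαp hpq
      _ = 2 * hypConst X := (two_mul _).symm
  · exact ⟨p, Or.inl (Or.inl hp), hαp.trans (two_mul (hypConst X) ▸ le_add_self)⟩

end Thin

/-- Let `x, y, u, v ∈ G` and `Γ := [xu] ∪ [uv] ∪ [vy]` be a union of three
geodesics.  If `L([xu]) ≤ l_max` and `L([vy]) ≤ l_max`, then for every `α ∈ Γ` there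
exists `β` on the geodesic `[xy]` with `d_G(α, β) ≤ 2 δ(G) + l_max`. -/
theorem dist_to_geodesic_of_three_sides (M : MetricGraph) (x y u v : M.X)
    (sxu suv svy sxy : Set M.X)
    (h1 : IsGeodesicArc x u sxu) (h2 : IsGeodesicArc u v suv)
    (h3 : IsGeodesicArc v y svy) (h4 : IsGeodesicArc x y sxy)
    (hlu : ENNReal.ofReal (dist x u) ≤ M.lmax)
    (hlv : ENNReal.ofReal (dist v y) ≤ M.lmax) :
    ∀ α ∈ sxu ∪ suv ∪ svy, ∃ β ∈ sxy,
      edist α β ≤ 2 * hypConst M.X + M.lmax := by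
  rintro α ((hα | hα) | hα)
  · exact ⟨x, h4.mem_left, (h1.edist_left_le hα).trans (hlu.trans le_add_self)⟩
  · obtain ⟨β, (hβ | hβ) | hβ, hαβ⟩ :=
      exists_edist_le_two_hypConst_of_mem_quadrilateral M.geodesic h1 h2 h3 h4 hα
    · refine ⟨x, h4.mem_left, ?_⟩
      calc edist α x ≤ edist α β + edist β x := edist_triangle _ _ _
        _ ≤ 2 * hypConst M.X + M.lmax := add_le_add hαβ ((h1.edist_left_le hβ).trans hlu)
    · refine ⟨y, h4.mem_right, ?_⟩
      calc edist α y ≤ edist α β + edist β y := edist_triangle _ _ _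
        _ ≤ 2 * hypConst M.X + M.lmax := add_le_add hαβ ((h3.edist_right_le hβ).trans hlv)
    · exact ⟨β, hβ, hαβ.trans le_self_add⟩
  · exact ⟨y, h4.mem_right, (h3.edist_right_le hα).trans (hlv.trans le_add_self)⟩
end
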